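/- arXiv:2010.09428 — 10 statements merged into one kernel-verified Lean document; each statement's English description precedes it below -/
import Mathlib

section
/- Let 𝒳 and 𝒴 be real Banach spaces, let Ω be a neighborhood of 0 in 𝒳, and let F : Ω → 𝒴 be a continuous function with F(0) = 0. Suppose there exist a surjective continuous linear operator L : 𝒳 → 𝒴 and a constant C ≥ 0 such that ‖F(x₁) − F(x₂) − L(x₁ − x₂)‖ ≤ C·(‖x₁‖ + ‖x₂‖)·‖x₁ − x₂‖ for all x₁, x₂ ∈ Ω. Then 0 lies in the interior of the image F(Ω) ⊆ 𝒴. -/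
set_option maxHeartbeats 1000000 in
/-- **Graves' open mapping theorem.** Let `𝒳` and `𝒴` be real Banach spaces, `Ω` a
neighborhood of `0` in `𝒳`, and `F : Ω → 𝒴` continuous with `F 0 = 0`. If there are a
surjective continuous linear operator `L : 𝒳 → 𝒴` and a constant `C ≥ 0` with
`‖F x₁ - F x₂ - L (x₁ - x₂)‖ ≤ C * (‖x₁‖ + ‖x₂‖) * ‖x₁ - x₂‖` on `Ω`, then `0` lies in
the interior of the image `F '' Ω`. -/
theorem graves_open_mapping
    {𝒳 𝒴 : Type*} [NormedAddCommGroup 𝒳] [NormedSpace ℝ 𝒳] [CompleteSpace 𝒳]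
    [NormedAddCommGroup 𝒴] [NormedSpace ℝ 𝒴] [CompleteSpace 𝒴]
    (Ω : Set 𝒳) (hΩ : Ω ∈ nhds (0 : 𝒳))
    (F : 𝒳 → 𝒴) (hFcont : ContinuousOn F Ω) (hF0 : F 0 = 0)
    (L : 𝒳 →L[ℝ] 𝒴) (hL : Function.Surjective L)
    (C : ℝ) (hC : 0 ≤ C)
    (hFL : ∀ x₁ ∈ Ω, ∀ x₂ ∈ Ω,
      ‖F x₁ - F x₂ - L (x₁ - x₂)‖ ≤ C * (‖x₁‖ + ‖x₂‖) * ‖x₁ - x₂‖) :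
    (0 : 𝒴) ∈ interior (F '' Ω) := by
  obtain ⟨fbar, -⟩ := L.exists_nonlinearRightInverse_of_surjective
    (LinearMap.range_eq_top.2 hL)
  set M : ℝ := max (fbar.nnnorm : ℝ) 1 with hMdef
  have hM1 : (1:ℝ) ≤ M := le_max_right _ _
  have hM0 : (0:ℝ) < M := lt_of_lt_of_le one_pos hM1
  have hfb : ∀ z : 𝒴, ‖fbar z‖ ≤ M * ‖z‖ := fun z =>
    (fbar.bound z).trans (mul_le_mul_of_nonneg_right (le_max_left _ _) (norm_nonneg _))
  obtain ⟨r, hr0, hrΩ⟩ : ∃ r > 0, Metric.closedBall (0:𝒳) r ⊆ Ω :=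
    Metric.nhds_basis_closedBall.mem_iff.mp hΩ
  set s : ℝ := min r (1/(4*C*M+1)) with hsdef
  have hden : (0:ℝ) < 4*C*M+1 := by positivity
  have hs0 : 0 < s := lt_min hr0 (by positivity)
  have hsr : s ≤ r := min_le_left _ _
  have hsΩ : Metric.closedBall (0:𝒳) s ⊆ Ω :=
    (Metric.closedBall_subset_closedBall hsr).trans hrΩ
  have hq : 2*C*s*M ≤ 1/2 := by
    have h1 : s ≤ 1/(4*C*M+1) := min_le_right _ _
    have h2 : s*(4*C*M+1) ≤ 1 := by
      calc s*(4*C*M+1) ≤ (1/(4*C*M+1))*(4*C*M+1) := by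
            exact mul_le_mul_of_nonneg_right h1 hden.le
        _ = 1 := by field_simp
    nlinarith [mul_nonneg (mul_nonneg hC hs0.le) hM0.le, hs0.le]
  have hδ : (0:ℝ) < s/(4*M) := by positivity
  have key : Metric.ball (0:𝒴) (s/(4*M)) ⊆ F '' Ω := by
    intro y hy
    have hy' : ‖y‖ < s/(4*M) := by simpa using hy
    have hy2 : 2*M*‖y‖ ≤ s/2 := by
      rw [lt_div_iff₀ (by positivity)] at hy'
      nlinarith
    set x : ℕ → 𝒳 := fun n => Nat.rec (0:𝒳) (fun _ xn => xn + fbar (y - F xn)) n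
      with hxdef
    have hx0 : x 0 = 0 := rfl
    have hxs : ∀ n, x (n+1) = x n + fbar (y - F (x n)) := fun n => rfl
    have H : ∀ n, ‖x n‖ ≤ 2*M*‖y‖*(1-(1/2:ℝ)^n) ∧ ‖y - F (x n)‖ ≤ (1/2:ℝ)^n * ‖y‖ := by
      intro n
      induction n with
      | zero => constructor
                · simp [hx0]
                · simp [hx0, hF0]
      | succ n ih =>
        obtain ⟨ih1, ih2⟩ := ih
        have hpow : (0:ℝ) < (1/2:ℝ)^n := by positivity
        have hpow1 : (1/2:ℝ)^n ≤ 1 := pow_le_one₀ (by norm_num) (by norm_num)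
        have hd : ‖fbar (y - F (x n))‖ ≤ M * ((1/2:ℝ)^n * ‖y‖) :=
          (hfb _).trans (by gcongr)
        have hxn1eq := hxs n
        have hx1bd : ‖x (n+1)‖ ≤ 2*M*‖y‖*(1-(1/2:ℝ)^(n+1)) := by
          calc ‖x (n+1)‖ ≤ ‖x n‖ + ‖fbar (y - F (x n))‖ := by
                rw [hxn1eq]; exact norm_add_le _ _
            _ ≤ 2*M*‖y‖*(1-(1/2:ℝ)^n) + M * ((1/2:ℝ)^n * ‖y‖) := add_le_add ih1 hd
            _ = 2*M*‖y‖*(1-(1/2:ℝ)^(n+1)) := by ring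
        refine ⟨hx1bd, ?_⟩
        have hyn : ‖y‖ ≥ 0 := norm_nonneg _
        have hxn_s : ‖x n‖ ≤ s := by
          nlinarith [mul_nonneg (mul_nonneg (by linarith : (0:ℝ) ≤ 2*M) hyn) hpow.le]
        have hxn1_s : ‖x (n+1)‖ ≤ s := by
          have hpow' : (0:ℝ) < (1/2:ℝ)^(n+1) := by positivity
          nlinarith [mul_nonneg (mul_nonneg (by linarith : (0:ℝ) ≤ 2*M) hyn) hpow'.le]
        have hmem1 : x n ∈ Ω := hsΩ (by simpa [Metric.mem_closedBall] using hxn_s)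
        have hmem2 : x (n+1) ∈ Ω := hsΩ (by simpa [Metric.mem_closedBall] using hxn1_s)
        have hLd : L (x (n+1) - x n) = y - F (x n) := by
          rw [hxn1eq]; simp
        have hkey : y - F (x (n+1)) = -(F (x (n+1)) - F (x n) - L (x (n+1) - x n)) := by
          rw [hLd]; abel
        have hdiff : ‖x (n+1) - x n‖ ≤ M * ((1/2:ℝ)^n * ‖y‖) := by
          rw [hxn1eq, add_sub_cancel_left]; exact hd
        calc ‖y - F (x (n+1))‖
            = ‖F (x (n+1)) - F (x n) - L (x (n+1) - x n)‖ := by rw [hkey, norm_neg]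
          _ ≤ C * (‖x (n+1)‖ + ‖x n‖) * ‖x (n+1) - x n‖ := hFL _ hmem2 _ hmem1
          _ ≤ C * (2*s) * (M * ((1/2:ℝ)^n * ‖y‖)) := by
              refine mul_le_mul ?_ hdiff (norm_nonneg _) (by positivity)
              exact mul_le_mul_of_nonneg_left (by linarith) hC
          _ = (2*C*s*M) * ((1/2:ℝ)^n * ‖y‖) := by ring
          _ ≤ (1/2) * ((1/2:ℝ)^n * ‖y‖) := by
              gcongr
          _ = (1/2:ℝ)^(n+1) * ‖y‖ := by ring
    have hcau : CauchySeq x := by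
      apply cauchySeq_of_le_geometric (1/2) (M*‖y‖) (by norm_num)
      intro n
      have h1 : ‖x (n+1) - x n‖ ≤ M * ((1/2:ℝ)^n * ‖y‖) := by
        rw [hxs n, add_sub_cancel_left]
        exact (hfb _).trans (mul_le_mul_of_nonneg_left (H n).2 hM0.le)
      rw [dist_eq_norm, norm_sub_rev]
      calc ‖x (n+1) - x n‖ ≤ M * ((1/2:ℝ)^n * ‖y‖) := h1
        _ = (M*‖y‖)*(1/2:ℝ)^n := by ring
    obtain ⟨xl, hxl⟩ := cauchySeq_tendsto_of_complete hcau
    have hbd : ∀ n, ‖x n‖ ≤ 2*M*‖y‖ := by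
      intro n
      have hpow : (0:ℝ) ≤ (1/2:ℝ)^n := by positivity
      nlinarith [(H n).1, norm_nonneg y, mul_nonneg (mul_nonneg (by linarith : (0:ℝ) ≤ 2*M) (norm_nonneg y)) hpow]
    have hxl_s : ‖xl‖ ≤ s := by
      have := le_of_tendsto (hxl.norm) (Filter.Eventually.of_forall
        (fun n => (hbd n).trans (by linarith [norm_nonneg y] : 2*M*‖y‖ ≤ s)))
      exact this
    have hxlΩ : xl ∈ Ω := hsΩ (by simpa [Metric.mem_closedBall] using hxl_s)
    have hFy : Filter.Tendsto (fun n => F (x n)) Filter.atTop (nhds y) := by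
      rw [← tendsto_sub_nhds_zero_iff]
      apply squeeze_zero_norm (a := fun n : ℕ => (1/2:ℝ)^n * ‖y‖) (fun n => by
        rw [norm_sub_rev]; exact (H n).2)
      have : Filter.Tendsto (fun n : ℕ => (1/2:ℝ)^n * ‖y‖) Filter.atTop (nhds (0*‖y‖)) :=
        (tendsto_pow_atTop_nhds_zero_of_lt_one (by norm_num) (by norm_num)).mul_const _
      simpa using this
    have hxΩ : ∀ n, x n ∈ Ω := fun n =>
      hsΩ (by
        have := (hbd n).trans (by linarith [norm_nonneg y] : 2*M*‖y‖ ≤ s)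
        simpa [Metric.mem_closedBall] using this)
    have hFxl : Filter.Tendsto (fun n => F (x n)) Filter.atTop (nhds (F xl)) := by
      apply (hFcont xl hxlΩ).tendsto.comp
      exact tendsto_nhdsWithin_iff.mpr ⟨hxl, Filter.Eventually.of_forall hxΩ⟩
    have : F xl = y := tendsto_nhds_unique hFxl hFy
    exact ⟨xl, hxlΩ, this⟩
  exact mem_interior_iff_mem_nhds.mpr
    (Filter.mem_of_superset (Metric.ball_mem_nhds 0 hδ) key)
end

section
/- Every surjective continuous linear operator L : 𝒳 → 𝒴 between real Banach spaces admits a continuous (not necessarily linear) right inverse: there is a continuous map g : 𝒴 → 𝒳 with L(g(y)) = y for all y ∈ 𝒴, which moreover maps bounded subsets of 𝒴 to bounded subsets of 𝒳. -/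
/-!
By the open mapping theorem every `y` has a preimage of norm `≤ K ‖y‖`. Such a preimage of `v`
remains an approximate preimage of every `w` near `v`, and approximate preimages of `w` form a
convex set, so a partition of unity on `𝒴 \ {0}` glues these local constants into a continuous `H`
with `‖H y‖ ≤ C ‖y‖` and `‖y - L (H y)‖ ≤ ‖y‖ / 2`. No constant works near `0`, but the linear
bound makes the extension by `H 0 = 0` continuous. The defect `D y = y - L (H y)` then contracts,
and `g y = ∑ₙ H (Dⁿ y)` is a locally uniformly convergent series of continuous maps whose image
under `L` telescopes to `y`.
-/

open Set Filter Metric Bornology Topology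

section

variable {E F : Type*} [NormedAddCommGroup E] [NormedAddCommGroup F]

theorem Bornology.IsBounded.image_of_norm_le_mul_norm {f : F → E} {C : ℝ}
    (hf : ∀ y, ‖f y‖ ≤ C * ‖y‖) {s : Set F} (hs : IsBounded s) : IsBounded (f '' s) := by
  obtain ⟨R, hR⟩ := isBounded_iff_forall_norm_le.1 hs
  refine isBounded_iff_forall_norm_le.2 ⟨|C| * R, ?_⟩
  rintro _ ⟨y, hy, rfl⟩
  calc ‖f y‖ ≤ C * ‖y‖ := hf y
    _ ≤ |C| * ‖y‖ := mul_le_mul_of_nonneg_right (le_abs_self C) (norm_nonneg y)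
    _ ≤ |C| * R := mul_le_mul_of_nonneg_left (hR y hy) (abs_nonneg C)

theorem norm_iterate_le_of_norm_le {S : F → F} {r : ℝ} (hr : 0 ≤ r) (hS : ∀ y, ‖S y‖ ≤ r * ‖y‖)
    (n : ℕ) (y : F) : ‖S^[n] y‖ ≤ r ^ n * ‖y‖ := by
  induction n with
  | zero => simp
  | succ n ih =>
    rw [Function.iterate_succ_apply', pow_succ', mul_assoc]
    exact (hS _).trans (mul_le_mul_of_nonneg_left ih hr)

theorem continuous_dite_eq_zero_of_norm_le [DecidableEq F] {f : {y : F // y ≠ 0} → E}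
    (hf : Continuous f) {C : ℝ} (hfC : ∀ y, ‖f y‖ ≤ C * ‖(y : F)‖) :
    Continuous fun y => if hy : y = 0 then 0 else f ⟨y, hy⟩ := by
  refine continuous_iff_continuousAt.2 fun y => ?_
  by_cases hy : y = 0
  · subst hy
    have hbound : ∀ z : F, ‖(if hz : z = 0 then 0 else f ⟨z, hz⟩ : E)‖ ≤ C * ‖z‖ := by
      intro z
      by_cases hz : z = 0
      · simp [hz]
      · simpa [hz] using hfC ⟨z, hz⟩
    have hlim : Tendsto (fun z : F => C * ‖z‖) (𝓝 0) (𝓝 0) := by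
      simpa using (tendsto_norm_zero (E := F)).const_mul C
    simpa [ContinuousAt] using squeeze_zero_norm hbound hlim
  · refine ContinuousOn.continuousAt ?_ (isOpen_ne.mem_nhds hy)
    rw [continuousOn_iff_continuous_domRestrict]
    exact hf.congr fun v => by simp [Set.domRestrict, v.2]

end

theorem continuous_tsum_of_norm_le_norm_mul {ι E F : Type*} [NormedAddCommGroup E]
    [CompleteSpace E] [NormedAddCommGroup F] {f : ι → F → E} {u : ι → ℝ}
    (hf : ∀ i, Continuous (f i)) (hu : Summable u) (hu0 : ∀ i, 0 ≤ u i)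
    (hfu : ∀ i y, ‖f i y‖ ≤ ‖y‖ * u i) : Continuous fun y => ∑' i, f i y := by
  refine continuous_iff_continuousAt.2 fun y₀ => ?_
  have hball : ball (0 : F) (‖y₀‖ + 1) ∈ 𝓝 y₀ := isOpen_ball.mem_nhds (by simp)
  refine ContinuousOn.continuousAt ?_ hball
  refine continuousOn_tsum (fun i => (hf i).continuousOn) (hu.mul_left (‖y₀‖ + 1)) ?_
  intro i y hy
  have hy : ‖y‖ ≤ ‖y₀‖ + 1 := (mem_ball_zero_iff.1 hy).le
  exact (hfu i y).trans (mul_le_mul_of_nonneg_right hy (hu0 i))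

namespace ContinuousLinearMap

variable {𝕜 E F : Type*} [NontriviallyNormedField 𝕜] [NormedAddCommGroup E] [NormedSpace 𝕜 E]
  [NormedAddCommGroup F] [NormedSpace 𝕜 F]

def defect (L : E →L[𝕜] F) (H : F → E) (y : F) : F := y - L (H y)

noncomputable def correctedRightInverse (L : E →L[𝕜] F) (H : F → E) (y : F) : E :=
  ∑' n, H ((L.defect H)^[n] y)

variable {L : E →L[𝕜] F} {H : F → E} {C r : ℝ}

theorem norm_apply_defect_iterate_le (hC : 0 ≤ C) (hH : ∀ y, ‖H y‖ ≤ C * ‖y‖) (hr : 0 ≤ r)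
    (hD : ∀ y, ‖L.defect H y‖ ≤ r * ‖y‖) (n : ℕ) (y : F) :
    ‖H ((L.defect H)^[n] y)‖ ≤ ‖y‖ * (C * r ^ n) :=
  calc ‖H ((L.defect H)^[n] y)‖ ≤ C * ‖(L.defect H)^[n] y‖ := hH _
    _ ≤ C * (r ^ n * ‖y‖) := mul_le_mul_of_nonneg_left (norm_iterate_le_of_norm_le hr hD n y) hC
    _ = ‖y‖ * (C * r ^ n) := by ring

theorem norm_correctedRightInverse_le (hC : 0 ≤ C) (hH : ∀ y, ‖H y‖ ≤ C * ‖y‖) (hr0 : 0 ≤ r)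
    (hr1 : r < 1) (hD : ∀ y, ‖L.defect H y‖ ≤ r * ‖y‖) (y : F) :
    ‖L.correctedRightInverse H y‖ ≤ C * (1 - r)⁻¹ * ‖y‖ := by
  have hgeom := ((hasSum_geometric_of_lt_one hr0 hr1).mul_left C).mul_left ‖y‖
  calc ‖L.correctedRightInverse H y‖ ≤ ‖y‖ * (C * (1 - r)⁻¹) :=
        tsum_of_norm_bounded hgeom (norm_apply_defect_iterate_le hC hH hr0 hD · y)
    _ = C * (1 - r)⁻¹ * ‖y‖ := mul_comm _ _

variable [CompleteSpace E]

theorem summable_apply_defect_iterate (hC : 0 ≤ C) (hH : ∀ y, ‖H y‖ ≤ C * ‖y‖) (hr0 : 0 ≤ r)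
    (hr1 : r < 1) (hD : ∀ y, ‖L.defect H y‖ ≤ r * ‖y‖) (y : F) :
    Summable fun n => H ((L.defect H)^[n] y) :=
  .of_norm_bounded (((summable_geometric_of_lt_one hr0 hr1).mul_left C).mul_left ‖y‖)
    (norm_apply_defect_iterate_le hC hH hr0 hD · y)

theorem continuous_correctedRightInverse (hHc : Continuous H) (hC : 0 ≤ C)
    (hH : ∀ y, ‖H y‖ ≤ C * ‖y‖) (hr0 : 0 ≤ r) (hr1 : r < 1)
    (hD : ∀ y, ‖L.defect H y‖ ≤ r * ‖y‖) : Continuous (L.correctedRightInverse H) := by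
  have hDc : Continuous (L.defect H) := continuous_id.sub (L.continuous.comp hHc)
  exact continuous_tsum_of_norm_le_norm_mul (fun n => hHc.comp (hDc.iterate n))
    ((summable_geometric_of_lt_one hr0 hr1).mul_left C) (fun n => by positivity)
    (norm_apply_defect_iterate_le hC hH hr0 hD)

theorem apply_correctedRightInverse (hC : 0 ≤ C) (hH : ∀ y, ‖H y‖ ≤ C * ‖y‖) (hr0 : 0 ≤ r)
    (hr1 : r < 1) (hD : ∀ y, ‖L.defect H y‖ ≤ r * ‖y‖) (y : F) :
    L (L.correctedRightInverse H y) = y := by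
  set D := L.defect H
  have hsum := ((summable_apply_defect_iterate hC hH hr0 hr1 hD y).hasSum.mapL L).tendsto_sum_nat
  have hpartial : ∀ N, ∑ n ∈ Finset.range N, L (H (D^[n] y)) = y - D^[N] y := by
    intro N
    have hstep : ∀ n, L (H (D^[n] y)) = D^[n] y - D^[n + 1] y := fun n => by
      rw [Function.iterate_succ_apply']
      simp only [D, defect, sub_sub_cancel]
    simp only [hstep, Finset.sum_range_sub', Function.iterate_zero_apply]
  have hD0 : Tendsto (fun N => D^[N] y) atTop (𝓝 0) := by
    refine squeeze_zero_norm (norm_iterate_le_of_norm_le hr0 hD · y) ?_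
    simpa using (tendsto_pow_atTop_nhds_zero_of_lt_one hr0 hr1).mul_const ‖y‖
  have hlim : Tendsto (fun N => y - D^[N] y) atTop (𝓝 y) := by
    simpa using tendsto_const_nhds.sub hD0
  exact tendsto_nhds_unique hsum (hlim.congr fun N => (hpartial N).symm)

end ContinuousLinearMap

section ApproxPreimages

variable {E F : Type*} [NormedAddCommGroup E] [NormedSpace ℝ E] [NormedAddCommGroup F]
  [NormedSpace ℝ F]

def ContinuousLinearMap.approxPreimages (L : E →L[ℝ] F) (C r : ℝ) (y : F) : Set E :=
  closedBall 0 (C * ‖y‖) ∩ L ⁻¹' closedBall y (r * ‖y‖)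

theorem ContinuousLinearMap.convex_approxPreimages (L : E →L[ℝ] F) (C r : ℝ) (y : F) :
    Convex ℝ (L.approxPreimages C r y) :=
  (convex_closedBall _ _).inter ((convex_closedBall _ _).linear_preimage L.toLinearMap)

theorem ContinuousLinearMap.eventually_mem_approxPreimages (L : E →L[ℝ] F) {x : E} {K r : ℝ}
    (hK : 0 ≤ K) (hr : 0 < r) (hx : ‖x‖ ≤ K * ‖L x‖) (hLx : L x ≠ 0) :
    ∀ᶠ w in 𝓝 (L x), x ∈ L.approxPreimages (2 * K) r w := by
  have hpos : 0 < ‖L x‖ := norm_pos_iff.2 hLx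
  have hnear : ∀ᶠ w in 𝓝 (L x), ‖L x‖ < 2 * ‖w‖ :=
    ContinuousAt.eventually_lt (by fun_prop) (by fun_prop) (by linarith)
  have hclose : ∀ᶠ w in 𝓝 (L x), ‖L x - w‖ < r * ‖w‖ :=
    ContinuousAt.eventually_lt (by fun_prop) (by fun_prop) (by simpa using mul_pos hr hpos)
  filter_upwards [hnear, hclose] with w hnear hclose
  simp only [approxPreimages, mem_inter_iff, mem_preimage, mem_closedBall, sub_zero, dist_eq_norm]
  constructor
  · nlinarith
  · linarith

theorem ContinuousLinearMap.exists_continuous_approx_rightInverse [CompleteSpace E]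
    [CompleteSpace F] (L : E →L[ℝ] F) (hL : Function.Surjective L) {r : ℝ} (hr : 0 < r) :
    ∃ (H : F → E) (C : ℝ), 0 ≤ C ∧ Continuous H ∧ (∀ y, ‖H y‖ ≤ C * ‖y‖) ∧
      ∀ y, ‖L.defect H y‖ ≤ r * ‖y‖ := by
  classical
  obtain ⟨K, hK, hpre⟩ := L.exists_preimage_norm_le hL
  choose pre hLpre hpre_le using hpre
  have hloc : ∀ v : {y : F // y ≠ 0}, ∃ x,
      ∀ᶠ w : {y : F // y ≠ 0} in 𝓝 v, x ∈ L.approxPreimages (2 * K) r w := by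
    intro v
    have hev := L.eventually_mem_approxPreimages hK.le hr
      (by rw [hLpre]; exact hpre_le v) (by rw [hLpre]; exact v.2)
    rw [hLpre] at hev
    exact ⟨pre v, (continuous_subtype_val.tendsto v).eventually hev⟩
  obtain ⟨h, hh⟩ := exists_continuous_forall_mem_convex_of_local_const
    (fun w => L.convex_approxPreimages _ _ _) hloc
  have hhC : ∀ w, ‖h w‖ ≤ 2 * K * ‖(w : F)‖ := fun w => mem_closedBall_zero_iff.1 (hh w).1
  refine ⟨fun y => if hy : y = 0 then 0 else h ⟨y, hy⟩, 2 * K, by positivity,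
    continuous_dite_eq_zero_of_norm_le h.continuous hhC, fun y => ?_, fun y => ?_⟩
  · by_cases hy : y = 0
    · simp [hy]
    · simpa [hy] using hhC ⟨y, hy⟩
  · by_cases hy : y = 0
    · simp [hy, ContinuousLinearMap.defect]
    · simpa [hy, ContinuousLinearMap.defect, dist_eq_norm, norm_sub_rev] using (hh ⟨y, hy⟩).2

end ApproxPreimages

/-- **Bartle–Graves theorem.** Every surjective continuous linear operator `L : 𝒳 → 𝒴`
between real Banach spaces admits a continuous (not necessarily linear) right inverse,
which moreover maps bounded subsets of `𝒴` to bounded subsets of `𝒳`. -/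
theorem bartle_graves
    {𝒳 𝒴 : Type*} [NormedAddCommGroup 𝒳] [NormedSpace ℝ 𝒳] [CompleteSpace 𝒳]
    [NormedAddCommGroup 𝒴] [NormedSpace ℝ 𝒴] [CompleteSpace 𝒴]
    (L : 𝒳 →L[ℝ] 𝒴) (hL : Function.Surjective L) :
    ∃ g : 𝒴 → 𝒳, Continuous g ∧ (∀ y : 𝒴, L (g y) = y) ∧
      ∀ s : Set 𝒴, Bornology.IsBounded s → Bornology.IsBounded (g '' s) := by
  have hr0 : (0 : ℝ) ≤ 1 / 2 := one_half_pos.le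
  have hr1 : (1 / 2 : ℝ) < 1 := one_half_lt_one
  obtain ⟨H, C, hC, hHc, hH, hD⟩ := L.exists_continuous_approx_rightInverse hL one_half_pos
  exact ⟨L.correctedRightInverse H,
    L.continuous_correctedRightInverse hHc hC hH hr0 hr1 hD,
    L.apply_correctedRightInverse hC hH hr0 hr1 hD,
    fun s hs => hs.image_of_norm_le_mul_norm (L.norm_correctedRightInverse_le hC hH hr0 hr1 hD)⟩
end

section
/- Let 𝒳 and 𝒴 be real Banach spaces, let Ω be a neighborhood of 0 in 𝒳, and let F : Ω → 𝒴 be a continuous function with F(0) = 0. Suppose there exist a surjective continuous linear operator L : 𝒳 → 𝒴 and a constant C ≥ 0 such that ‖F(x₁) − F(x₂) − L(x₁ − x₂)‖ ≤ C·(‖x₁‖ + ‖x₂‖)·‖x₁ − x₂‖ for all x₁, x₂ ∈ Ω. Then F has a continuous local right inverse: there are an open neighborhood V of 0 in 𝒴 and a continuous map σ : V → Ω such that F(σ(y)) = y for all y ∈ V. -/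
/-!
The open mapping theorem gives bounded preimages under `L`; gluing them with a partition of
unity on `𝒴 ∖ {0}`, where the admissible values form convex sets, yields a continuous
`B : 𝒴 → 𝒳` with `‖B y‖ ≤ M ‖y‖` and `‖L (B y) - y‖ ≤ ‖y‖ / 4`. For small `y` the Newton-type
iteration `x₀ = 0`, `xₙ₊₁ = xₙ + B (y - F xₙ)` halves the residual `y - F xₙ` at every step,
because the quadratic error bound makes `F` almost affine on a small ball. The increments are
therefore dominated by a geometric series uniformly in `y`, and their sum `σ y` is continuous with
`F (σ y) = y`.
-/

open Set Filter Topology Metric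

theorem continuous_of_continuousOn_compl_zero_of_norm_le {E G : Type*} [NormedAddCommGroup E]
    [NormedAddCommGroup G] {B : E → G} {M : ℝ} (hB : ContinuousOn B {0}ᶜ)
    (hBM : ∀ y, ‖B y‖ ≤ M * ‖y‖) : Continuous B := by
  refine continuous_iff_continuousAt.2 fun y => ?_
  rcases eq_or_ne y 0 with rfl | hy
  · have hB0 : B 0 = 0 := norm_le_zero_iff.1 (by simpa using hBM 0)
    refine tendsto_iff_norm_sub_tendsto_zero.2 (squeeze_zero_norm (a := fun y => M * ‖y‖)
      (fun y => by simpa [hB0] using hBM y) ?_)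
    simpa using (continuous_norm.tendsto (0 : E)).const_mul M
  · exact hB.continuousAt (isOpen_compl_singleton.mem_nhds hy)

namespace ContinuousLinearMap

variable {𝒳 𝒴 : Type*} [NormedAddCommGroup 𝒳] [NormedSpace ℝ 𝒳] [CompleteSpace 𝒳]
  [NormedAddCommGroup 𝒴] [NormedSpace ℝ 𝒴] [CompleteSpace 𝒴]

theorem exists_continuous_approx_rightInverse_s2 (L : 𝒳 →L[ℝ] 𝒴) (hL : Function.Surjective L)
    {ε : ℝ} (hε : 0 < ε) :
    ∃ M > 0, ∃ B : 𝒴 → 𝒳, Continuous B ∧ (∀ y, ‖B y‖ ≤ M * ‖y‖) ∧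
      ∀ y, ‖L (B y) - y‖ ≤ ε * ‖y‖ := by
  obtain ⟨K, hK, hpre⟩ := L.exists_preimage_norm_le hL
  let t : {y : 𝒴 // y ≠ 0} → Set 𝒳 := fun z =>
    closedBall 0 (2 * K * ‖(z : 𝒴)‖) ∩ L ⁻¹' closedBall (z : 𝒴) (ε * ‖(z : 𝒴)‖)
  have ht : ∀ z, Convex ℝ (t z) := fun z =>
    (convex_closedBall _ _).inter ((convex_closedBall _ _).linear_preimage (L : 𝒳 →ₗ[ℝ] 𝒴))
  -- A preimage of `z` of norm `≤ K ‖z‖` stays admissible near `z`, since `‖z‖ > 0`.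
  have hloc : ∀ z, ∃ c, ∀ᶠ w in 𝓝 z, c ∈ t w := by
    intro z
    obtain ⟨c, hcz, hc⟩ := hpre z
    have hz : 0 < ‖(z : 𝒴)‖ := norm_pos_iff.2 z.2
    have hnorm : ∀ᶠ w : {y : 𝒴 // y ≠ 0} in 𝓝 z, ‖(z : 𝒴)‖ / 2 < ‖(w : 𝒴)‖ :=
      (continuous_subtype_val.norm.tendsto z).eventually (lt_mem_nhds (half_lt_self hz))
    have hdist : ∀ᶠ w : {y : 𝒴 // y ≠ 0} in 𝓝 z, ‖(w : 𝒴) - z‖ < ε / 2 * ‖(z : 𝒴)‖ :=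
      ((continuous_subtype_val.sub continuous_const).norm.tendsto z).eventually
        (gt_mem_nhds (by simpa using mul_pos (half_pos hε) hz))
    refine ⟨c, ?_⟩
    filter_upwards [hnorm, hdist] with w hw hwz
    refine ⟨?_, ?_⟩
    · rw [mem_closedBall_zero_iff]; nlinarith
    · rw [mem_preimage, mem_closedBall, hcz, dist_eq_norm, norm_sub_rev]; nlinarith
  obtain ⟨g, hg⟩ := exists_continuous_forall_mem_convex_of_local_const ht hloc
  classical
  let B : 𝒴 → 𝒳 := fun y => if h : y = 0 then 0 else g ⟨y, h⟩
  have hB : ∀ y, ‖B y‖ ≤ 2 * K * ‖y‖ ∧ ‖L (B y) - y‖ ≤ ε * ‖y‖ := by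
    intro y
    rcases eq_or_ne y 0 with rfl | hy
    · simp [B]
    · obtain ⟨h₁, h₂⟩ := hg ⟨y, hy⟩
      simp only [B, dif_neg hy]
      exact ⟨mem_closedBall_zero_iff.1 h₁, by simpa [dist_eq_norm] using h₂⟩
  refine ⟨2 * K, by positivity, B, ?_, fun y => (hB y).1, fun y => (hB y).2⟩
  refine continuous_of_continuousOn_compl_zero_of_norm_le ?_ fun y => (hB y).1
  rw [continuousOn_iff_continuous_domRestrict]
  show Continuous fun z : {y : 𝒴 // y ≠ 0} => B z
  exact g.continuous.congr fun z => by simp only [B, dif_neg z.2]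

end ContinuousLinearMap

section GravesIteration

variable {𝒳 𝒴 : Type*} [NormedAddCommGroup 𝒳] [NormedAddCommGroup 𝒴] {F : 𝒳 → 𝒴} {B : 𝒴 → 𝒳}

def gravesIter (F : 𝒳 → 𝒴) (B : 𝒴 → 𝒳) (y : 𝒴) : ℕ → 𝒳
  | 0 => 0
  | n + 1 => gravesIter F B y n + B (y - F (gravesIter F B y n))

@[simp]
theorem gravesIter_zero (y : 𝒴) : gravesIter F B y 0 = 0 := rfl

theorem gravesIter_succ (y : 𝒴) (n : ℕ) :
    gravesIter F B y (n + 1) = gravesIter F B y n + B (y - F (gravesIter F B y n)) := rfl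

/-- The limit of `gravesIter`, written as the series of its increments so that `continuousOn_tsum`
applies. -/
noncomputable def gravesLimit (F : 𝒳 → 𝒴) (B : 𝒴 → 𝒳) (y : 𝒴) : 𝒳 :=
  ∑' n, (gravesIter F B y (n + 1) - gravesIter F B y n)

variable [NormedSpace ℝ 𝒳] [NormedSpace ℝ 𝒴] {L : 𝒳 →L[ℝ] 𝒴} {C M ρ δ : ℝ}

theorem norm_sub_apply_add_le_half {Ω : Set 𝒳} (hC : 0 ≤ C)
    (hFL : ∀ x₁ ∈ Ω, ∀ x₂ ∈ Ω,
      ‖F x₁ - F x₂ - L (x₁ - x₂)‖ ≤ C * (‖x₁‖ + ‖x₂‖) * ‖x₁ - x₂‖)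
    (hBM : ∀ y, ‖B y‖ ≤ M * ‖y‖) (hLB : ∀ y, ‖L (B y) - y‖ ≤ 1 / 4 * ‖y‖)
    {x : 𝒳} {y : 𝒴} (hx : x ∈ Ω) (hx' : x + B (y - F x) ∈ Ω)
    (hsmall : C * (‖x + B (y - F x)‖ + ‖x‖) * M ≤ 1 / 4) :
    ‖y - F (x + B (y - F x))‖ ≤ 1 / 2 * ‖y - F x‖ := by
  set r := y - F x
  set x' := x + B r
  have hlin : ‖F x' - F x - L (B r)‖ ≤ 1 / 4 * ‖r‖ :=
    calc ‖F x' - F x - L (B r)‖ ≤ C * (‖x'‖ + ‖x‖) * ‖B r‖ := by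
          simpa [x'] using hFL x' hx' x hx
      _ ≤ C * (‖x'‖ + ‖x‖) * (M * ‖r‖) := by gcongr; exact hBM r
      _ ≤ 1 / 4 * ‖r‖ := by rw [← mul_assoc]; gcongr
  calc ‖y - F x'‖ = ‖-(L (B r) - r) - (F x' - F x - L (B r))‖ := by congr 1; simp only [r]; abel
    _ ≤ ‖L (B r) - r‖ + ‖F x' - F x - L (B r)‖ := by
        rw [← norm_neg (L (B r) - r)]; exact norm_sub_le _ _
    _ ≤ 1 / 2 * ‖r‖ := by linarith [hLB r]

/-- For `‖y‖ < δ` the iterates have norm `≤ 2 M ‖y‖`, so `radius_le` keeps them in `ball 0 ρ`,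
and `radius_small` makes the nonlinear error of a step at most a quarter of the residual. -/
structure GravesHypotheses (F : 𝒳 → 𝒴) (L : 𝒳 →L[ℝ] 𝒴) (B : 𝒴 → 𝒳) (C M ρ δ : ℝ) : Prop where
  nonneg : 0 ≤ C
  pos : 0 < M
  map_zero : F 0 = 0
  approx : ∀ x₁ ∈ ball 0 ρ, ∀ x₂ ∈ ball 0 ρ,
    ‖F x₁ - F x₂ - L (x₁ - x₂)‖ ≤ C * (‖x₁‖ + ‖x₂‖) * ‖x₁ - x₂‖
  norm_le : ∀ y, ‖B y‖ ≤ M * ‖y‖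
  norm_apply_sub_le : ∀ y, ‖L (B y) - y‖ ≤ 1 / 4 * ‖y‖
  radius_le : 2 * M * δ ≤ ρ
  radius_small : 16 * C * M ^ 2 * δ ≤ 1

namespace GravesHypotheses

variable {y : 𝒴}

theorem two_mul_norm_lt (h : GravesHypotheses F L B C M ρ δ) (hy : y ∈ ball 0 δ) :
    2 * M * ‖y‖ < ρ :=
  (mul_lt_mul_of_pos_left (mem_ball_zero_iff.1 hy) (by linarith [h.pos])).trans_le h.radius_le

theorem norm_le_of_le_partial_sum (h : GravesHypotheses F L B C M ρ δ) {x : 𝒳} (n : ℕ)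
    (hx : ‖x‖ ≤ 2 * M * (1 - (1 / 2) ^ n) * ‖y‖) : ‖x‖ ≤ 2 * M * ‖y‖ :=
  hx.trans <| by
    nlinarith [mul_nonneg (mul_nonneg h.pos.le (pow_nonneg (by norm_num : (0 : ℝ) ≤ 1 / 2) n))
      (norm_nonneg y)]

theorem estimates (h : GravesHypotheses F L B C M ρ δ) (hy : y ∈ ball 0 δ) (n : ℕ) :
    ‖y - F (gravesIter F B y n)‖ ≤ (1 / 2) ^ n * ‖y‖ ∧
      ‖gravesIter F B y n‖ ≤ 2 * M * (1 - (1 / 2) ^ n) * ‖y‖ := by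
  have hyρ := h.two_mul_norm_lt hy
  induction n with
  | zero => simp [h.map_zero]
  | succ n ih =>
    set x := gravesIter F B y n
    obtain ⟨hres, hx⟩ := ih
    have hstep : ‖B (y - F x)‖ ≤ M * ((1 / 2) ^ n * ‖y‖) :=
      (h.norm_le _).trans (by gcongr; exact h.pos.le)
    have hx' : ‖x + B (y - F x)‖ ≤ 2 * M * (1 - (1 / 2) ^ (n + 1)) * ‖y‖ :=
      calc ‖x + B (y - F x)‖ ≤ ‖x‖ + ‖B (y - F x)‖ := norm_add_le _ _
        _ ≤ 2 * M * (1 - (1 / 2) ^ (n + 1)) * ‖y‖ := by rw [pow_succ]; linarith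
    have hxy := h.norm_le_of_le_partial_sum n hx
    have hxy' := h.norm_le_of_le_partial_sum (n + 1) hx'
    have hsmall : C * (‖x + B (y - F x)‖ + ‖x‖) * M ≤ 1 / 4 :=
      calc C * (‖x + B (y - F x)‖ + ‖x‖) * M ≤ C * (4 * M * δ) * M := by
            have : M * ‖y‖ ≤ M * δ := by gcongr; exacts [h.pos.le, (mem_ball_zero_iff.1 hy).le]
            gcongr; exacts [h.pos.le, h.nonneg, by linarith]
        _ ≤ 1 / 4 := by linarith [h.radius_small]
    refine ⟨?_, hx'⟩
    calc ‖y - F (gravesIter F B y (n + 1))‖ ≤ 1 / 2 * ‖y - F x‖ :=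
          norm_sub_apply_add_le_half h.nonneg h.approx h.norm_le h.norm_apply_sub_le
            (mem_ball_zero_iff.2 (by linarith)) (mem_ball_zero_iff.2 (by linarith)) hsmall
      _ ≤ (1 / 2) ^ (n + 1) * ‖y‖ := by rw [pow_succ', mul_assoc]; gcongr

theorem norm_gravesIter_le (h : GravesHypotheses F L B C M ρ δ) (hy : y ∈ ball 0 δ) (n : ℕ) :
    ‖gravesIter F B y n‖ ≤ 2 * M * ‖y‖ :=
  h.norm_le_of_le_partial_sum n (h.estimates hy n).2

theorem gravesIter_mem_ball (h : GravesHypotheses F L B C M ρ δ) (hy : y ∈ ball 0 δ) (n : ℕ) :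
    gravesIter F B y n ∈ ball 0 ρ :=
  mem_ball_zero_iff.2 ((h.norm_gravesIter_le hy n).trans_lt (h.two_mul_norm_lt hy))

theorem norm_gravesIter_succ_sub_le (h : GravesHypotheses F L B C M ρ δ) (hy : y ∈ ball 0 δ)
    (n : ℕ) : ‖gravesIter F B y (n + 1) - gravesIter F B y n‖ ≤ M * δ * (1 / 2) ^ n :=
  calc ‖gravesIter F B y (n + 1) - gravesIter F B y n‖ = ‖B (y - F (gravesIter F B y n))‖ := by
        rw [gravesIter_succ, add_sub_cancel_left]
    _ ≤ M * ((1 / 2) ^ n * ‖y‖) :=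
        (h.norm_le _).trans (by gcongr; exacts [h.pos.le, (h.estimates hy n).1])
    _ ≤ M * ((1 / 2) ^ n * δ) := by gcongr; exacts [h.pos.le, (mem_ball_zero_iff.1 hy).le]
    _ = M * δ * (1 / 2) ^ n := by ring

variable [CompleteSpace 𝒳]

theorem tendsto_gravesIter (h : GravesHypotheses F L B C M ρ δ) (hy : y ∈ ball 0 δ) :
    Tendsto (gravesIter F B y) atTop (𝓝 (gravesLimit F B y)) := by
  have := (Summable.of_norm_bounded (summable_geometric_two.mul_left (M * δ))
    (h.norm_gravesIter_succ_sub_le hy)).hasSum.tendsto_sum_nat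
  simpa only [Finset.sum_range_sub (gravesIter F B y), gravesIter_zero, sub_zero, gravesLimit]
    using this

theorem gravesLimit_mem_ball (h : GravesHypotheses F L B C M ρ δ) (hy : y ∈ ball 0 δ) :
    gravesLimit F B y ∈ ball 0 ρ :=
  mem_ball_zero_iff.2 <| (le_of_tendsto' (h.tendsto_gravesIter hy).norm
    (h.norm_gravesIter_le hy)).trans_lt (h.two_mul_norm_lt hy)

theorem apply_gravesLimit (h : GravesHypotheses F L B C M ρ δ) (hF : ContinuousOn F (ball 0 ρ))
    (hy : y ∈ ball 0 δ) : F (gravesLimit F B y) = y := by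
  have hres : Tendsto (fun n => F (gravesIter F B y n)) atTop (𝓝 y) := by
    refine tendsto_iff_norm_sub_tendsto_zero.2 (squeeze_zero (fun _ => norm_nonneg _)
      (fun n => (norm_sub_rev _ _).trans_le (h.estimates hy n).1) ?_)
    simpa using (tendsto_pow_atTop_nhds_zero_of_lt_one (by norm_num : (0 : ℝ) ≤ 1 / 2)
      (by norm_num)).mul_const ‖y‖
  exact tendsto_nhds_unique ((hF.continuousAt (isOpen_ball.mem_nhds
    (h.gravesLimit_mem_ball hy))).tendsto.comp (h.tendsto_gravesIter hy)) hres

theorem continuousOn_gravesLimit (h : GravesHypotheses F L B C M ρ δ)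
    (hF : ContinuousOn F (ball 0 ρ)) (hB : Continuous B) :
    ContinuousOn (gravesLimit F B) (ball 0 δ) := by
  have hcont : ∀ n, ContinuousOn (fun y => gravesIter F B y n) (ball 0 δ) := by
    intro n
    induction n with
    | zero => exact continuousOn_const
    | succ n ih => exact ih.add (hB.comp_continuousOn (continuousOn_id.sub
        (hF.comp ih fun y hy => h.gravesIter_mem_ball hy n)))
  exact continuousOn_tsum (fun n => (hcont (n + 1)).sub (hcont n))
    (summable_geometric_two.mul_left (M * δ)) fun n y hy => h.norm_gravesIter_succ_sub_le hy n

end GravesHypotheses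

end GravesIteration

/-- **Continuous local right inverses (Corollary to Graves' theorem).** Let `𝒳` and `𝒴`
be real Banach spaces, `Ω` a neighborhood of `0` in `𝒳`, and `F : Ω → 𝒴` continuous with
`F 0 = 0`. If there are a surjective continuous linear operator `L : 𝒳 → 𝒴` and `C ≥ 0`
with `‖F x₁ - F x₂ - L (x₁ - x₂)‖ ≤ C * (‖x₁‖ + ‖x₂‖) * ‖x₁ - x₂‖` on `Ω`, then `F` has
a continuous local right inverse defined on a neighborhood of `0 ∈ 𝒴`. -/
theorem graves_local_right_inverse
    {𝒳 𝒴 : Type*} [NormedAddCommGroup 𝒳] [NormedSpace ℝ 𝒳] [CompleteSpace 𝒳]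
    [NormedAddCommGroup 𝒴] [NormedSpace ℝ 𝒴] [CompleteSpace 𝒴]
    (Ω : Set 𝒳) (hΩ : Ω ∈ nhds (0 : 𝒳))
    (F : 𝒳 → 𝒴) (hFcont : ContinuousOn F Ω) (hF0 : F 0 = 0)
    (L : 𝒳 →L[ℝ] 𝒴) (hL : Function.Surjective L)
    (C : ℝ) (hC : 0 ≤ C)
    (hFL : ∀ x₁ ∈ Ω, ∀ x₂ ∈ Ω,
      ‖F x₁ - F x₂ - L (x₁ - x₂)‖ ≤ C * (‖x₁‖ + ‖x₂‖) * ‖x₁ - x₂‖) :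
    ∃ V : Set 𝒴, IsOpen V ∧ (0 : 𝒴) ∈ V ∧
      ∃ σ : 𝒴 → 𝒳, ContinuousOn σ V ∧ ∀ y ∈ V, σ y ∈ Ω ∧ F (σ y) = y := by
  obtain ⟨ρ, hρ, hρΩ⟩ := Metric.mem_nhds_iff.1 hΩ
  obtain ⟨M, hM, B, hB, hBM, hLB⟩ :=
    L.exists_continuous_approx_rightInverse_s2 hL (by norm_num : (0 : ℝ) < 1 / 4)
  set δ := min (ρ / (2 * M)) (1 / (16 * (C + 1) * M ^ 2))
  have hδ : 0 < δ := by positivity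
  have hδρ : 2 * M * δ ≤ ρ := by
    have := min_le_left (ρ / (2 * M)) (1 / (16 * (C + 1) * M ^ 2))
    rw [le_div_iff₀ (by positivity)] at this; linarith
  have hδC : 16 * C * M ^ 2 * δ ≤ 1 := by
    have := min_le_right (ρ / (2 * M)) (1 / (16 * (C + 1) * M ^ 2))
    rw [le_div_iff₀ (by positivity)] at this; nlinarith [sq_nonneg M]
  have h : GravesHypotheses F L B C M ρ δ :=
    ⟨hC, hM, hF0, fun x₁ h₁ x₂ h₂ => hFL x₁ (hρΩ h₁) x₂ (hρΩ h₂), hBM, hLB, hδρ, hδC⟩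
  have hF : ContinuousOn F (ball 0 ρ) := hFcont.mono hρΩ
  exact ⟨ball 0 δ, isOpen_ball, mem_ball_self hδ, gravesLimit F B,
    h.continuousOn_gravesLimit hF hB,
    fun y hy => ⟨hρΩ (h.gravesLimit_mem_ball hy), h.apply_gravesLimit hF hy⟩⟩
end

section
/- Let B, C, D be unital complex Banach algebras and let φ : B → D, ψ : C → D be continuous unital algebra homomorphisms such that every element d ∈ D can be written d = φ(b) + ψ(c) with b ∈ B, c ∈ C. Then the map π : Bˣ × Cˣ → Dˣ, π(S,T) = φ(S)⁻¹ · ψ(T), has a continuous local right inverse defined in a neighborhood of the identity: there are an open neighborhood U of 1 in Dˣ and a continuous map σ : U → Bˣ × Cˣ such that π(σ(R)) = R for all R ∈ U. -/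
/-!
Near `(1, 1)`, write `S = (1 + b)⁻¹` and `T = 1 + c`; then `π (S, T) = F (b, c)` with
`F (b, c) = (1 + φ b) * (1 + ψ c)`, whose strict derivative at `0` is `(b, c) ↦ φ b + ψ c`,
surjective by hypothesis. Its kernel need not be complemented, so the implicit function theorem
is not available. Instead, as in the Bartle–Graves theorem, a partition of unity yields continuous
approximate right inverses `uₙ` of the derivative with geometrically decaying errors, and the
simplified Newton iteration `xₙ₊₁ = xₙ + uₙ (y - F xₙ)` converges uniformly near `y = 1` to a
continuous solution of `F x = y`.
-/

open Metric Set Filter Topology NNReal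

namespace ContinuousLinearMap.NonlinearRightInverse

variable {E F : Type*} [NormedAddCommGroup E] [NormedSpace ℝ E]
  [NormedAddCommGroup F] [NormedSpace ℝ F] {θ : E →L[ℝ] F}

theorem exists_continuous_approx (θ' : θ.NonlinearRightInverse) {η : ℝ} (hη : 0 < η) :
    ∃ v : F → E, Continuous v ∧ ∀ y, ‖θ (v y) - y‖ ≤ η ∧ ‖v y‖ ≤ θ'.nnnorm * (‖y‖ + η) := by
  let t : F → Set E := fun y => θ ⁻¹' closedBall y η ∩ closedBall 0 (θ'.nnnorm * (‖y‖ + η))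
  have ht : ∀ y, Convex ℝ (t y) := fun y =>
    ((convex_closedBall y η).linear_preimage θ.toLinearMap).inter (convex_closedBall 0 _)
  obtain ⟨v, hv⟩ := exists_continuous_forall_mem_convex_of_local_const ht fun y₀ => by
    refine ⟨θ' y₀, eventually_of_mem (ball_mem_nhds y₀ hη) fun y hy => ⟨?_, ?_⟩⟩
    · rw [mem_preimage, θ'.right_inv]
      exact mem_closedBall_comm.1 (ball_subset_closedBall hy)
    · rw [mem_closedBall_zero_iff]
      refine (θ'.bound y₀).trans (mul_le_mul_of_nonneg_left ?_ θ'.nnnorm.2)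
      have := norm_le_norm_add_norm_sub' y₀ y
      rw [mem_ball, dist_eq_norm] at hy
      linarith [norm_sub_rev y y₀]
  exact ⟨v, v.continuous, fun y =>
    ⟨mem_closedBall_iff_norm.1 (hv y).1, mem_closedBall_zero_iff.1 (hv y).2⟩⟩

end ContinuousLinearMap.NonlinearRightInverse

section NewtonSeq

variable {E F : Type*} [AddCommMonoid E] [Sub F]

def newtonSeq (f : E → F) (u : ℕ → F → E) (b : E) (y : F) : ℕ → E
  | 0 => b
  | n + 1 => newtonSeq f u b y n + u n (y - f (newtonSeq f u b y n))

variable {f : E → F} {u : ℕ → F → E} {b : E} {y : F}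

theorem newtonSeq_eq_add_sum (n : ℕ) :
    newtonSeq f u b y n = b + ∑ k ∈ Finset.range n, u k (y - f (newtonSeq f u b y k)) := by
  induction n with
  | zero => simp [newtonSeq]
  | succ n ih => rw [Finset.sum_range_succ, ← add_assoc, ← ih, newtonSeq]

theorem tendsto_newtonSeq [TopologicalSpace E] [ContinuousAdd E]
    (h : Summable fun k => u k (y - f (newtonSeq f u b y k))) :
    Tendsto (newtonSeq f u b y) atTop (𝓝 (b + ∑' k, u k (y - f (newtonSeq f u b y k)))) := by
  simpa only [← newtonSeq_eq_add_sum] using h.hasSum.tendsto_sum_nat.const_add b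

theorem continuousOn_newtonSeq [TopologicalSpace E] [ContinuousAdd E] [TopologicalSpace F]
    [ContinuousSub F] {s : Set E} {V : Set F} (hf : ContinuousOn f s)
    (hu : ∀ n, Continuous (u n)) (hmaps : ∀ n, MapsTo (newtonSeq f u b · n) V s) (n : ℕ) :
    ContinuousOn (newtonSeq f u b · n) V := by
  induction n with
  | zero => exact continuousOn_const
  | succ n ih =>
    exact ih.add ((hu n).comp_continuousOn (continuousOn_id.sub (hf.comp ih (hmaps n))))

end NewtonSeq

theorem norm_le_of_approx_rightInverse {E F : Type*} [Norm E] [SeminormedAddGroup F]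
    {u : ℕ → F → E} {ρ : ℝ} {M : ℝ≥0} (hu : ∀ n z, ‖u n z‖ ≤ M * (‖z‖ + ρ / 2 ^ n / 4))
    {n : ℕ} {z : F} (hz : ‖z‖ ≤ ρ / 2 ^ n) : ‖u n z‖ ≤ 2 * M * (ρ / 2 ^ n) := by
  calc ‖u n z‖ ≤ M * (‖z‖ + ρ / 2 ^ n / 4) := hu n z
    _ ≤ M * (2 * (ρ / 2 ^ n)) := by gcongr; linarith [norm_nonneg z]
    _ = 2 * M * (ρ / 2 ^ n) := by ring

section Graves

variable {E F : Type*} [NormedAddCommGroup E] [NormedSpace ℝ E]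
  [NormedAddCommGroup F] [NormedSpace ℝ F] {f : E → F} {u : ℕ → F → E} {b : E} {y : F}
  {θ : E →L[ℝ] F} {ε ρ : ℝ} {c M : ℝ≥0}

theorem ApproximatesLinearOn.newtonSeq_estimates
    (hf : ApproximatesLinearOn f θ (closedBall b ε) c) (hcM : (c * M : ℝ) ≤ 1 / 8)
    (hρ : 4 * M * ρ ≤ ε)
    (hu : ∀ n z, ‖θ (u n z) - z‖ ≤ ρ / 2 ^ n / 4 ∧ ‖u n z‖ ≤ M * (‖z‖ + ρ / 2 ^ n / 4))
    (hy : ‖y - f b‖ ≤ ρ) (n : ℕ) :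
    ‖y - f (newtonSeq f u b y n)‖ ≤ ρ / 2 ^ n ∧
      dist (newtonSeq f u b y n) b ≤ 4 * M * ρ * (1 - 1 / 2 ^ n) := by
  induction n with
  | zero => simpa [newtonSeq] using hy
  | succ n ih =>
    obtain ⟨hres, hdist⟩ := ih
    set x := newtonSeq f u b y n
    set z := y - f x
    have hρ0 : 0 ≤ ρ / 2 ^ n := (norm_nonneg _).trans hres
    have hd := norm_le_of_approx_rightInverse (fun n z => (hu n z).2) hres
    have hx : x ∈ closedBall b ε := by
      refine hdist.trans (hρ.trans' ?_)
      have : 0 ≤ M * (ρ / 2 ^ n) := by positivity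
      have : M * ρ * (1 / 2 ^ n) = M * (ρ / 2 ^ n) := by ring
      nlinarith
    have hdist' : dist (x + u n z) b ≤ 4 * M * ρ * (1 - 1 / 2 ^ (n + 1)) :=
      calc dist (x + u n z) b ≤ dist (x + u n z) x + dist x b := dist_triangle _ _ _
        _ ≤ 2 * M * (ρ / 2 ^ n) + 4 * M * ρ * (1 - 1 / 2 ^ n) := by
          rw [dist_self_add_left]; gcongr
        _ = 4 * M * ρ * (1 - 1 / 2 ^ (n + 1)) := by field_simp; ring
    have hx' : x + u n z ∈ closedBall b ε := by
      refine hdist'.trans (hρ.trans' ?_)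
      have : 0 ≤ M * ρ := mul_nonneg M.2 ((norm_nonneg _).trans hy)
      have : (0 : ℝ) ≤ 1 / 2 ^ (n + 1) := by positivity
      nlinarith
    have hlin := hf _ hx' _ hx
    rw [add_sub_cancel_left] at hlin
    refine ⟨?_, hdist'⟩
    calc ‖y - f (x + u n z)‖
        = ‖(z - θ (u n z)) - (f (x + u n z) - f x - θ (u n z))‖ := by congr 1; simp only [z]; abel
      _ ≤ ρ / 2 ^ n / 4 + c * (2 * M * (ρ / 2 ^ n)) := by
          refine (norm_sub_le _ _).trans (add_le_add ?_ (hlin.trans ?_))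
          · rw [norm_sub_rev]; exact (hu n z).1
          · gcongr
      _ ≤ ρ / 2 ^ n / 4 + 2 * (1 / 8) * (ρ / 2 ^ n) := by
          have : (c : ℝ) * (2 * M * (ρ / 2 ^ n)) = 2 * (c * M) * (ρ / 2 ^ n) := by ring
          rw [this]; gcongr
      _ = ρ / 2 ^ (n + 1) := by field_simp; ring

theorem ApproximatesLinearOn.exists_continuousOn_rightInverse [CompleteSpace E]
    (hf : ApproximatesLinearOn f θ (closedBall b ε) c) (θ' : θ.NonlinearRightInverse)
    (hc : (c * θ'.nnnorm : ℝ) ≤ 1 / 8) (hε : 0 < ε) :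
    ∃ ρ > 0, ∃ g : F → E, ContinuousOn g (ball (f b) ρ) ∧
      ∀ y ∈ ball (f b) ρ, g y ∈ closedBall b ε ∧ f (g y) = y := by
  set M := θ'.nnnorm
  set ρ := ε / (4 * M + 1)
  have hρ : 0 < ρ := by positivity
  have hρε : 4 * M * ρ ≤ ε := by
    have : ρ * (4 * M + 1) = ε := div_mul_cancel₀ _ (by positivity)
    linarith
  choose u hu_cont hu using fun n : ℕ => θ'.exists_continuous_approx (η := ρ / 2 ^ n / 4)
    (by positivity)
  have hest : ∀ y ∈ ball (f b) ρ, ∀ n, _ := fun y hy =>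
    hf.newtonSeq_estimates hc hρε hu (mem_ball_iff_norm.1 hy).le
  have hmaps : ∀ n, MapsTo (newtonSeq f u b · n) (ball (f b) ρ) (closedBall b ε) :=
    fun n y hy => by
      have : 0 ≤ M * ρ * (1 / 2 ^ n) := by positivity
      exact mem_closedBall.2 ((hest y hy n).2.trans (by linarith))
  have hstep : ∀ n, ∀ y ∈ ball (f b) ρ,
      ‖u n (y - f (newtonSeq f u b y n))‖ ≤ 2 * M * (ρ / 2 ^ n) :=
    fun n y hy =>
      norm_le_of_approx_rightInverse (fun n z => (hu n z).2) (hest y hy n).1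
  have hsummable : Summable fun n : ℕ => 2 * M * (ρ / 2 ^ n) := by
    simpa [div_eq_mul_inv, mul_assoc] using summable_geometric_two.mul_left (2 * M * ρ)
  have hcont := continuousOn_newtonSeq hf.continuousOn hu_cont hmaps
  refine ⟨ρ, hρ, fun y => b + ∑' n, u n (y - f (newtonSeq f u b y n)),
    continuousOn_const.add (continuousOn_tsum (fun n => ((hcont (n + 1)).sub (hcont n)).congr
      fun y _ => by simp [newtonSeq]) hsummable hstep), fun y hy => ?_⟩
  have hlim := tendsto_newtonSeq (.of_norm_bounded hsummable fun n => hstep n y hy)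
  have hmem := isClosed_closedBall.mem_of_tendsto hlim (.of_forall fun n => hmaps n hy)
  refine ⟨hmem, tendsto_nhds_unique (l := atTop) (f := fun n => f (newtonSeq f u b y n)) ?_ ?_⟩
  · exact (hf.continuousOn _ hmem).tendsto.comp
      (tendsto_nhdsWithin_iff.2 ⟨hlim, .of_forall fun n => hmaps n hy⟩)
  · rw [tendsto_iff_norm_sub_tendsto_zero]
    refine squeeze_zero (fun _ => norm_nonneg _)
      (fun n => (norm_sub_rev _ _).trans_le (hest y hy n).1) ?_
    exact tendsto_const_nhds.div_atTop (tendsto_pow_atTop_atTop_of_one_lt one_lt_two)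

end Graves

theorem hasStrictFDerivAt_one_add_mul_one_add {𝕜 E F A : Type*} [NontriviallyNormedField 𝕜]
    [NormedAddCommGroup E] [NormedSpace 𝕜 E] [NormedAddCommGroup F] [NormedSpace 𝕜 F]
    [NormedRing A] [NormedAlgebra 𝕜 A] (a : E →L[𝕜] A) (a' : F →L[𝕜] A) :
    HasStrictFDerivAt (fun p : E × F => (1 + a p.1) * (1 + a' p.2)) (a.coprod a') 0 := by
  have ha := ((a.comp (.fst 𝕜 E F)).hasStrictFDerivAt (x := 0)).const_add (1 : A)
  have ha' := ((a'.comp (.snd 𝕜 E F)).hasStrictFDerivAt (x := 0)).const_add (1 : A)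
  refine (ha.mul' ha').congr_fderiv ?_
  ext x <;> simp

theorem Units.exists_continuousOn_lift {X R : Type*} [TopologicalSpace X] [NormedRing R]
    [CompleteSpace R] {g : X → R} {s : Set X} (hg : ContinuousOn g s)
    (hs : ∀ x ∈ s, IsUnit (g x)) : ∃ v : X → Rˣ, ContinuousOn v s ∧ ∀ x ∈ s, (v x : R) = g x := by
  let e := Units.isOpenEmbedding_val.toOpenPartialHomeomorph (Units.val : Rˣ → R)
  have hmaps : MapsTo g s e.target := fun x hx => by simpa [e, IsUnit] using hs x hx
  exact ⟨e.symm ∘ g, e.continuousOn_symm.comp hg hmaps, fun x hx =>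
    Units.isOpenEmbedding_val.toOpenPartialHomeomorph_right_inv _ (hs x hx)⟩

theorem isUnit_one_add_of_norm_lt_one {R : Type*} [NormedRing R] [HasSummableGeomSeries R]
    {x : R} (h : ‖x‖ < 1) : IsUnit (1 + x) := by
  simpa using isUnit_one_sub_of_norm_lt_one (x := -x) (by rwa [norm_neg])

theorem exists_continuousOn_rightInverse_one_add_mul_one_add {E F A : Type*}
    [NormedAddCommGroup E] [NormedSpace ℝ E] [CompleteSpace E]
    [NormedAddCommGroup F] [NormedSpace ℝ F] [CompleteSpace F]
    [NormedRing A] [NormedAlgebra ℝ A] [CompleteSpace A]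
    (a : E →L[ℝ] A) (a' : F →L[ℝ] A) (h : ∀ z, ∃ x y, z = a x + a' y) :
    ∃ ρ > 0, ∃ g : A → E × F, ContinuousOn g (ball 1 ρ) ∧
      ∀ z ∈ ball 1 ρ, ‖g z‖ < 1 ∧ (1 + a (g z).1) * (1 + a' (g z).2) = z := by
  have hsurj : (a.coprod a').range = ⊤ := LinearMap.range_eq_top.2 fun z =>
    let ⟨x, y, hz⟩ := h z; ⟨(x, y), hz.symm⟩
  obtain ⟨θ', hθ'⟩ := (a.coprod a').exists_nonlinearRightInverse_of_surjective hsurj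
  obtain ⟨s, hs, hfs⟩ := (hasStrictFDerivAt_one_add_mul_one_add a a').approximates_deriv_on_nhds
    (c := (8 * θ'.nnnorm)⁻¹) (Or.inr (by positivity))
  obtain ⟨ε, hε, hεs⟩ :=
    nhds_basis_closedBall.mem_iff.1 (inter_mem hs (ball_mem_nhds 0 one_pos))
  have hf := hfs.mono_set (hεs.trans inter_subset_left)
  obtain ⟨ρ, hρ, g, hg, hgf⟩ :=
    hf.exists_continuousOn_rightInverse θ' (by push_cast; field_simp; norm_num) hε
  simp only [Prod.fst_zero, Prod.snd_zero, map_zero, add_zero, mul_one] at hg hgf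
  exact ⟨ρ, hρ, g, hg, fun z hz =>
    ⟨mem_ball_zero_iff.1 (hεs (hgf z hz).1).2, (hgf z hz).2⟩⟩

/-- **Local right inverse for the double-coset map on invertibles.** Let `B, C, D` be
unital complex Banach algebras and `φ : B → D`, `ψ : C → D` continuous unital algebra
homomorphisms with `φ[B] + ψ[C] = D`. Then the map `π : Bˣ × Cˣ → Dˣ`,
`π (S, T) = φ(S)⁻¹ * ψ(T)`, has a continuous local right inverse defined in a
neighborhood of the identity of `Dˣ`. -/
theorem local_section_of_units_map
    {B C D : Type*} [NormedRing B] [NormedAlgebra ℂ B] [CompleteSpace B]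
    [NormedRing C] [NormedAlgebra ℂ C] [CompleteSpace C]
    [NormedRing D] [NormedAlgebra ℂ D] [CompleteSpace D]
    (φ : B →ₐ[ℂ] D) (hφ : Continuous φ)
    (ψ : C →ₐ[ℂ] D) (hψ : Continuous ψ)
    (hsum : ∀ d : D, ∃ b : B, ∃ c : C, d = φ b + ψ c) :
    ∃ U : Set Dˣ, IsOpen U ∧ (1 : Dˣ) ∈ U ∧
      ∃ σ : Dˣ → Bˣ × Cˣ, ContinuousOn σ U ∧
        ∀ R ∈ U,
          (Units.map φ.toRingHom.toMonoidHom (σ R).1)⁻¹ *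
            Units.map ψ.toRingHom.toMonoidHom (σ R).2 = R := by
  obtain ⟨ρ, hρ, g, hg, hgF⟩ := exists_continuousOn_rightInverse_one_add_mul_one_add
    ⟨φ.toLinearMap.restrictScalars ℝ, hφ⟩ ⟨ψ.toLinearMap.restrictScalars ℝ, hψ⟩ hsum
  let U : Set Dˣ := Units.val ⁻¹' ball 1 ρ
  have hgU : ContinuousOn (fun R : Dˣ => g R) U :=
    hg.comp Units.continuous_val.continuousOn (mapsTo_preimage _ _)
  obtain ⟨vB, hvB, hvB_val⟩ := Units.exists_continuousOn_lift
    ((continuous_fst.comp_continuousOn hgU).const_add 1) fun R hR =>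
      isUnit_one_add_of_norm_lt_one ((norm_fst_le _).trans_lt (hgF R hR).1)
  obtain ⟨vC, hvC, hvC_val⟩ := Units.exists_continuousOn_lift
    ((continuous_snd.comp_continuousOn hgU).const_add 1) fun R hR =>
      isUnit_one_add_of_norm_lt_one ((norm_snd_le _).trans_lt (hgF R hR).1)
  refine ⟨U, isOpen_ball.preimage Units.continuous_val, by simpa [U] using hρ,
    fun R => ((vB R)⁻¹, vC R), hvB.inv.prodMk hvC, fun R hR => Units.ext ?_⟩
  have hgR : (1 + φ (g R).1) * (1 + ψ (g R).2) = R := (hgF R hR).2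
  simpa [hvB_val R hR, hvC_val R hR] using hgR
end

section
/- Let φ : A → B be a surjective continuous unital algebra homomorphism between unital complex Banach algebras. Then the induced continuous group homomorphism Aˣ → Bˣ on groups of invertible elements is a Serre fibration. -/
/-- A continuous map `f : E → B` is a Serre fibration if it has the homotopy lifting
property with respect to maps from finite-dimensional cubes `[0,1]ᵏ`. -/
def IsSerreFibration {E B : Type*} [TopologicalSpace E] [TopologicalSpace B]
    (f : E → B) : Prop :=
  Continuous f ∧
    ∀ (k : ℕ) (H : ((Fin k → unitInterval) × unitInterval) → B)
      (h : (Fin k → unitInterval) → E),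
      Continuous H → Continuous h → (∀ x, f (h x) = H (x, 0)) →
        ∃ H' : ((Fin k → unitInterval) × unitInterval) → E,
          Continuous H' ∧ (∀ p, f (H' p) = H p) ∧ ∀ x, H' (x, 0) = h x

/-! By the open mapping theorem `φ` has preimages of controlled norm. Averaging such preimages
with a partition of unity and iterating the resulting approximation, the same holds for
postcomposition `C(Y, A) → C(Y, B)` with `φ` whenever `Y` is compact Hausdorff; so every continuous
family of elements of `B` close to `1` lifts to a continuous family of units of `A` close to `1`.

A homotopy `H : X × I → Bˣ` is then lifted in short time steps. If the reparametrised homotopy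
`(x, t) ↦ H (x, s t)` lifts and `s'` is close to `s`, uniform continuity makes
`H (x, s' t) H (x, s t)⁻¹` uniformly close to `1`; multiplying the lift by a lift of this ratio
that is `1` at time `0` gives a lift for `s'`. Connectedness of `I` carries the lift from `s = 0`
to `s = 1`. -/

open Function Filter Topology

theorem AddMonoidHom.surjective_of_exists_approx_preimage {E F : Type*}
    [NormedAddCommGroup E] [CompleteSpace E] [NormedAddCommGroup F]
    (f : E →+ F) (hf : Continuous f) {C : ℝ} (hC : 0 ≤ C)
    (happrox : ∀ y, ∃ x, dist (f x) y ≤ ‖y‖ / 2 ∧ ‖x‖ ≤ C * ‖y‖) : Surjective f := by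
  choose g hg using happrox
  intro y
  let r : ℕ → F := fun n => (fun z => z - f (g z))^[n] y
  have hr_succ : ∀ n, r (n + 1) = r n - f (g (r n)) := fun n =>
    iterate_succ_apply' _ n y
  have hr : ∀ n, ‖r n‖ ≤ ‖y‖ * (1 / 2) ^ n := by
    intro n
    induction n with
    | zero => simp [r]
    | succ n ih =>
      rw [hr_succ, ← dist_eq_norm, dist_comm, pow_succ]
      linarith [(hg (r n)).1]
  have hu : ∀ n, ‖g (r n)‖ ≤ C * ‖y‖ * (1 / 2) ^ n := fun n => by
    rw [mul_assoc]; exact (hg (r n)).2.trans (mul_le_mul_of_nonneg_left (hr n) hC)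
  obtain ⟨x, hx⟩ : Summable (fun n => g (r n)) :=
    .of_norm_bounded (summable_geometric_two.mul_left (C * ‖y‖)) hu
  have hsum : ∀ n, ∑ i ∈ Finset.range n, f (g (r i)) = y - r n := fun n => by
    simp only [show ∀ i, f (g (r i)) = r i - r (i + 1) from fun i => by rw [hr_succ]; abel,
      Finset.sum_range_sub', r, iterate_zero_apply]
  have hr0 : Tendsto r atTop (𝓝 0) :=
    squeeze_zero_norm hr (by simpa using (tendsto_pow_atTop_nhds_zero_of_lt_one
      (by norm_num : (0 : ℝ) ≤ 1 / 2) (by norm_num)).const_mul ‖y‖)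
  refine ⟨x, tendsto_nhds_unique ((hx.map f hf).tendsto_sum_nat) ?_⟩
  simpa [hsum] using (tendsto_const_nhds (x := y)).sub hr0

section CompLeft

variable {X E F : Type*} [TopologicalSpace X] [CompactSpace X]
  [NormedAddCommGroup E] [NormedSpace ℝ E] [NormedAddCommGroup F] [NormedSpace ℝ F]

open Metric in
theorem ContinuousLinearMap.exists_approx_compLeft_preimage [T2Space X] (f : E →L[ℝ] F)
    {C : ℝ} (hC : 0 ≤ C) (hf : ∀ y, ∃ x, f x = y ∧ ‖x‖ ≤ C * ‖y‖) (g : C(X, F)) :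
    ∃ ℓ : C(X, E), dist ((f : C(E, F)).comp ℓ) g ≤ ‖g‖ / 2 ∧ ‖ℓ‖ ≤ C * ‖g‖ := by
  rcases eq_or_ne g 0 with rfl | hg
  · exact ⟨0, by simp, by simp⟩
  have hr : 0 < ‖g‖ / 2 := by positivity
  obtain ⟨ℓ, hℓ⟩ := exists_continuous_forall_mem_convex_of_local_const
    (t := fun x => f ⁻¹' closedBall (g x) (‖g‖ / 2) ∩ closedBall 0 (C * ‖g‖))
    (fun x => ((convex_closedBall _ _).linear_preimage f.toLinearMap).inter (convex_closedBall _ _))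
    fun x₀ => by
      obtain ⟨c, hfc, hc⟩ := hf (g x₀)
      refine ⟨c, ?_⟩
      filter_upwards [g.continuous.continuousAt (closedBall_mem_nhds (g x₀) hr)] with x hx
      refine ⟨by simpa [hfc, dist_comm] using hx, ?_⟩
      simpa using hc.trans (mul_le_mul_of_nonneg_left (g.norm_coe_le_norm x₀) hC)
  exact ⟨ℓ, (ContinuousMap.dist_le hr.le).2 fun x => (hℓ x).1,
    (ContinuousMap.norm_le _ (by positivity)).2 fun x => by simpa using (hℓ x).2⟩

theorem ContinuousLinearMap.exists_compLeft_preimage_norm_le [T2Space X] [CompleteSpace E]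
    [CompleteSpace F] (f : E →L[ℝ] F) (hf : Surjective f) :
    ∃ C > 0, ∀ g : C(X, F), ∃ ℓ : C(X, E), (f : C(E, F)).comp ℓ = g ∧ ‖ℓ‖ ≤ C * ‖g‖ := by
  obtain ⟨C, hC, hpre⟩ := f.exists_preimage_norm_le hf
  let Φ : C(X, E) →+ C(X, F) := f.toAddMonoidHom.compLeftContinuous X f.continuous
  have hΦ : Continuous Φ := ContinuousMap.continuous_postcomp (f : C(E, F))
  exact (Φ.toRealLinearMap hΦ).exists_preimage_norm_le <|
    Φ.surjective_of_exists_approx_preimage hΦ hC.le (f.exists_approx_compLeft_preimage hC.le hpre)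

end CompLeft

open unitInterval

theorem unitInterval.dist_mul_right_le (s s' t : I) : dist (s * t) (s' * t) ≤ dist s s' := by
  simp only [Subtype.dist_eq, Set.Icc.coe_mul, Real.dist_eq, ← sub_mul, abs_mul]
  exact mul_le_of_le_one_right (abs_nonneg _) (abs_le.2 ⟨by linarith [t.2.1], t.2.2⟩)

theorem ContinuousMap.exists_forall_dist_lt_norm_mul_inv_sub_one_lt {X B : Type*}
    [TopologicalSpace X] [CompactSpace X] [NormedRing B] (H : C(X × I, Bˣ)) {ε : ℝ} (hε : 0 < ε) :
    ∃ δ > 0, ∀ x s t, dist s t < δ → ‖(H (x, t) : B) * ↑(H (x, s))⁻¹ - 1‖ < ε := by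
  let q : C(I × I, C(X, B)) := ContinuousMap.curry
    ⟨fun p : (I × I) × X => (H (p.2, p.1.2) : B) * ↑(H (p.2, p.1.1))⁻¹ - 1, by fun_prop⟩
  obtain ⟨δ, hδ, hq⟩ := Metric.uniformContinuous_iff.1
    (CompactSpace.uniformContinuous_of_continuous q.continuous) ε hε
  refine ⟨δ, hδ, fun x s t hst => ?_⟩
  have hqs : q (s, s) = 0 := by ext; simp [q]
  have := hq (a := (s, t)) (b := (s, s)) (by simpa [Prod.dist_eq, dist_comm] using hst)
  rw [hqs, dist_zero_right] at this
  exact ((q (s, t)).norm_coe_le_norm x).trans_lt this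

section UnitsLift

variable {X A B : Type*} [TopologicalSpace X] [CompactSpace X]
  [NormedRing A] [CompleteSpace A] [NormedRing B]

theorem RingHom.exists_units_lift_of_norm_mul_inv_sub_one_lt (φ : A →+* B) {C : ℝ} (hC : 0 < C)
    (hlift : ∀ c : C(X × I, B), ∃ ℓ : C(X × I, A), (∀ p, φ (ℓ p) = c p) ∧ ‖ℓ‖ ≤ C * ‖c‖)
    {G₀ G₁ : C(X × I, Bˣ)} (hG : ∀ p, ‖(G₁ p : B) * ↑(G₀ p)⁻¹ - 1‖ < (2 * C)⁻¹)
    (hG0 : ∀ x, G₁ (x, 0) = G₀ (x, 0)) {L₀ : C(X × I, Aˣ)}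
    (hL₀ : ∀ p, Units.map φ.toMonoidHom (L₀ p) = G₀ p) :
    ∃ L₁ : C(X × I, Aˣ), (∀ p, Units.map φ.toMonoidHom (L₁ p) = G₁ p) ∧
      ∀ x, L₁ (x, 0) = L₀ (x, 0) := by
  let c : C(X × I, B) := ⟨fun p => (G₁ p : B) * ↑(G₀ p)⁻¹ - 1, by fun_prop⟩
  obtain ⟨ℓ, hℓ, hℓc⟩ := hlift c
  have hℓ_lt : ‖ℓ‖ < 2⁻¹ := calc
    ‖ℓ‖ ≤ C * ‖c‖ := hℓc
    _ < C * (2 * C)⁻¹ := by gcongr; exact (c.norm_lt_iff (by positivity)).2 hG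
    _ = 2⁻¹ := by field_simp
  -- Subtracting `ℓ (x, 0)` makes the unit `1 - a p` equal to `1` at time `0` without changing
  -- its image, since `c (x, 0) = 0`.
  let a : C(X × I, A) := ⟨fun p => ℓ (p.1, 0) - ℓ p, by fun_prop⟩
  have ha : ∀ p, ‖a p‖ < 1 := fun p => calc
    ‖a p‖ ≤ ‖ℓ (p.1, 0)‖ + ‖ℓ p‖ := norm_sub_le _ _
    _ < 2⁻¹ + 2⁻¹ := add_lt_add ((ℓ.norm_coe_le_norm _).trans_lt hℓ_lt)
        ((ℓ.norm_coe_le_norm _).trans_lt hℓ_lt)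
    _ = 1 := by norm_num
  obtain ⟨u, hu⟩ : ∃ u : C(X × I, Aˣ), ∀ p, (u p : A) = 1 - a p :=
    ⟨.unitsOfForallIsUnit (f := 1 - a) fun p => isUnit_one_sub_of_norm_lt_one (ha p),
      fun _ => rfl⟩
  refine ⟨u * L₀, fun p => Units.ext ?_, fun x => Units.ext ?_⟩
  · have hc0 : c (p.1, 0) = 0 := by simp [c, hG0]
    calc (Units.map φ.toMonoidHom ((u * L₀) p) : B) = (1 + c p) * G₀ p := by
          simp only [ContinuousMap.mul_apply, Units.coe_map, Units.val_mul, MonoidHom.coe_coe,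
            RingHom.toMonoidHom_eq_coe, map_mul, hu, map_sub, map_one, ← hL₀ p]
          simp [a, hℓ, hc0]
      _ = G₁ p := by simp [c, mul_assoc]
  · simp [ContinuousMap.mul_apply, hu, a]

theorem RingHom.exists_units_homotopy_lift [T2Space X] [NormedSpace ℝ A] [NormedSpace ℝ B]
    [CompleteSpace B] (φ : A →+* B) (hφ : Continuous φ) (hsurj : Surjective φ)
    (H : C(X × I, Bˣ)) (h : C(X, Aˣ)) (h0 : ∀ x, Units.map φ.toMonoidHom (h x) = H (x, 0)) :
    ∃ L : C(X × I, Aˣ), (∀ p, Units.map φ.toMonoidHom (L p) = H p) ∧ ∀ x, L (x, 0) = h x := by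
  obtain ⟨C, hC, hlift⟩ :=
    (φ.toAddMonoidHom.toRealLinearMap hφ).exists_compLeft_preimage_norm_le (X := X × I) hsurj
  obtain ⟨δ, hδ, hclose⟩ := H.exists_forall_dist_lt_norm_mul_inv_sub_one_lt
    (ε := (2 * C)⁻¹) (by positivity)
  let Hs (s : I) : C(X × I, Bˣ) := H.comp ⟨fun p => (p.1, s * p.2), by fun_prop⟩
  let P (s : I) : Prop := ∃ L : C(X × I, Aˣ),
    (∀ p, Units.map φ.toMonoidHom (L p) = Hs s p) ∧ ∀ x, L (x, 0) = h x
  have hstep : ∀ s s', dist s s' < δ → P s → P s' := by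
    rintro s s' hss' ⟨L, hL, hL0⟩
    obtain ⟨L', hL', hL'0⟩ := φ.exists_units_lift_of_norm_mul_inv_sub_one_lt hC
      (fun c => (hlift c).imp fun ℓ hℓ => ⟨fun p => DFunLike.congr_fun hℓ.1 p, hℓ.2⟩)
      (G₀ := Hs s) (G₁ := Hs s')
      (fun p => hclose _ _ _ ((unitInterval.dist_mul_right_le s s' p.2).trans_lt hss'))
      (fun x => by simp [Hs]) hL
    exact ⟨L', hL', fun x => (hL'0 x).trans (hL0 x)⟩
  have hP : P 0 → P 1 := PreconnectedSpace.induction₂' (fun s s' => P s → P s')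
    (fun s => by
      filter_upwards [Metric.ball_mem_nhds s hδ] with s' hs'
      exact ⟨hstep s s' (by rwa [dist_comm]), hstep s' s hs'⟩)
    ⟨fun _ _ _ h₁ h₂ => h₂ ∘ h₁⟩ 0 1
  obtain ⟨L, hL, hL0⟩ := hP ⟨h.comp .fst, fun p => by simpa [Hs] using h0 p.1, fun _ => rfl⟩
  exact ⟨L, fun p => by simpa [Hs] using hL p, hL0⟩

end UnitsLift

/-- **Invertibles of a Banach algebra quotient.** If `φ : A → B` is a surjective
continuous unital algebra homomorphism of unital complex Banach algebras, then the
induced map `Aˣ → Bˣ` on groups of invertible elements is a Serre fibration. -/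
theorem units_map_of_surjective_isSerreFibration
    {A B : Type*} [NormedRing A] [NormedAlgebra ℂ A] [CompleteSpace A]
    [NormedRing B] [NormedAlgebra ℂ B] [CompleteSpace B]
    (φ : A →ₐ[ℂ] B) (hφ : Continuous φ) (hsurj : Function.Surjective φ) :
    IsSerreFibration (fun u : Aˣ => Units.map φ.toRingHom.toMonoidHom u) := by
  refine ⟨Continuous.units_map _ hφ, fun k H h hH hh h0 => ?_⟩
  obtain ⟨L, hL, hL0⟩ := φ.toRingHom.exists_units_homotopy_lift hφ hsurj ⟨H, hH⟩ ⟨h, hh⟩ h0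
  exact ⟨L, L.continuous, hL, hL0⟩
end

section
/- Let X ⊆ ℂⁿ be a compact polynomially convex set. For z ∈ X let ε_z : B(X) → ℂ denote evaluation at z, ε_z(f) = f(z), which is a character of B(X). Then the map z ↦ ε_z is a homeomorphism from X onto the character space of B(X); in particular, every character of B(X) is evaluation at a unique point of X. -/
/-!
Evaluation `z ↦ ε_z` is a continuous map from the compact space `X` to the Hausdorff character
space, injective because the coordinate functions lie in `B(X)`; so it is a homeomorphism once
it is onto. A character `φ` is determined by the point `w = (φ z₁, …, φ zₙ)`, since it sends a
polynomial `p` to `p w` and polynomials are dense in `B(X)`. Characters have norm at most one,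
so `|p w| ≤ ‖p‖_X` for every `p`, hence `w ∈ X` by polynomial convexity, and then `φ = ε_w`.
-/

set_option synthInstance.maxHeartbeats 400000
set_option maxHeartbeats 1000000

/-- A compact set `K ⊆ ℂⁿ` is polynomially convex if it contains every point `w ∈ ℂⁿ`
such that `|p w| ≤ sup_{z ∈ K} |p z|` for every complex polynomial `p`. -/
def IsPolyConvex {n : ℕ} (K : Set (Fin n → ℂ)) : Prop :=
  ∀ w : Fin n → ℂ,
    (∀ p : MvPolynomial (Fin n) ℂ,
      ‖MvPolynomial.eval w p‖ ≤ ⨆ z : K, ‖MvPolynomial.eval (z : Fin n → ℂ) p‖) →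
    w ∈ K

/-- For a compact set `X ⊆ ℂⁿ`, `BX X hX` is the Banach algebra `B(X)`: the closure in
`C(X, ℂ)` (with the supremum norm) of the subalgebra of restrictions to `X` of complex
polynomial functions. -/
noncomputable def BX {ι : Type*} [Fintype ι] (X : Set (ι → ℂ)) (hX : IsCompact X) :
    Subalgebra ℂ C(X, ℂ) :=
  haveI : CompactSpace X := isCompact_iff_compactSpace.mp hX
  ((MvPolynomial.aeval
      (fun i => ⟨fun z => (z : ι → ℂ) i,
        (continuous_apply i).comp continuous_subtype_val⟩ : ι → C(X, ℂ))).range).topologicalClosure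

open MvPolynomial WeakDual

namespace Subalgebra

variable {X 𝕜 : Type*} [TopologicalSpace X] [CommSemiring 𝕜] [TopologicalSpace 𝕜]
  [IsTopologicalSemiring 𝕜] [Nontrivial 𝕜]

noncomputable def evalCharacter (A : Subalgebra 𝕜 C(X, 𝕜)) : C(X, characterSpace 𝕜 A) where
  toFun x :=
    ⟨{ toFun := fun f => (f : C(X, 𝕜)) x
       map_add' := fun _ _ => rfl
       map_smul' := fun _ _ => rfl
       cont := (continuous_eval_const x).comp continuous_subtype_val },
      ⟨fun h => one_ne_zero (DFunLike.congr_fun h 1), fun _ _ => rfl⟩⟩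
  continuous_toFun := by
    refine Continuous.subtype_mk (continuous_of_continuous_eval fun f => ?_) _
    exact map_continuous (f : C(X, 𝕜))

theorem evalCharacter_injective {A : Subalgebra 𝕜 C(X, 𝕜)} (hA : A.SeparatesPoints) :
    Function.Injective A.evalCharacter := by
  intro x y hxy
  by_contra hne
  obtain ⟨_, ⟨f, hf, rfl⟩, hfxy⟩ := hA hne
  exact hfxy (congrArg (fun φ : characterSpace 𝕜 A => φ ⟨f, hf⟩) hxy)

end Subalgebra

namespace BX

variable {ι : Type*} [Fintype ι] {X : Set (ι → ℂ)} {hX : IsCompact X}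

variable (X) in
def coord (i : ι) : C(X, ℂ) :=
  ⟨fun z => (z : ι → ℂ) i, (continuous_apply i).comp continuous_subtype_val⟩

theorem aeval_coord_mem (p : MvPolynomial ι ℂ) : aeval (coord X) p ∈ BX X hX :=
  have := isCompact_iff_compactSpace.mp hX
  Subalgebra.le_topologicalClosure _ ⟨p, rfl⟩

variable (X hX) in
noncomputable def polyHom : MvPolynomial ι ℂ →ₐ[ℂ] BX X hX :=
  (aeval (coord X)).codRestrict _ aeval_coord_mem

@[simp]
theorem polyHom_apply_apply (p : MvPolynomial ι ℂ) (z : X) :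
    (polyHom X hX p : C(X, ℂ)) z = eval (z : ι → ℂ) p := by
  change ContinuousMap.evalAlgHom ℂ ℂ z (aeval (coord X) p) = _
  rw [← AlgHom.comp_apply, comp_aeval]
  rfl

theorem denseRange_polyHom : DenseRange (polyHom X hX) := by
  have := isCompact_iff_compactSpace.mp hX
  rw [DenseRange, Subtype.dense_iff, ← Set.range_comp]
  exact (Subalgebra.topologicalClosure_coe _).le

theorem separatesPoints : (BX X hX).SeparatesPoints := by
  intro x y hxy
  obtain ⟨i, hi⟩ := Function.ne_iff.mp (Subtype.coe_ne_coe.mpr hxy)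
  exact ⟨_, ⟨_, (polyHom X hX (MvPolynomial.X i)).2, rfl⟩, by simpa using hi⟩

noncomputable def characterPoint (φ : characterSpace ℂ (BX X hX)) : ι → ℂ :=
  fun i => φ (polyHom X hX (MvPolynomial.X i))

theorem apply_polyHom (φ : characterSpace ℂ (BX X hX)) (p : MvPolynomial ι ℂ) :
    φ (polyHom X hX p) = eval (characterPoint φ) p := by
  have : (CharacterSpace.toAlgHom φ).comp (polyHom X hX) = aeval (characterPoint φ) :=
    algHom_ext fun i => by simp [characterPoint]
  exact DFunLike.congr_fun this p

theorem characterSpace_ext {φ ψ : characterSpace ℂ (BX X hX)}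
    (h : characterPoint φ = characterPoint ψ) : φ = ψ := by
  have hpoly : ∀ p, φ (polyHom X hX p) = ψ (polyHom X hX p) := by
    simp [apply_polyHom, h]
  ext f
  exact congrFun (denseRange_polyHom.equalizer (map_continuous φ) (map_continuous ψ)
    (funext hpoly)) f

@[simp]
theorem characterPoint_evalCharacter (z : X) :
    characterPoint ((BX X hX).evalCharacter z) = z := by
  ext i
  exact (polyHom_apply_apply (MvPolynomial.X i) z).trans (eval_X _)

section Norm

variable [CompactSpace X]

instance : CompleteSpace (BX X hX) :=
  (Subalgebra.isClosed_topologicalClosure _).completeSpace_coe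

theorem norm_polyHom (p : MvPolynomial ι ℂ) :
    ‖polyHom X hX p‖ = ⨆ z : X, ‖eval (z : ι → ℂ) p‖ := by
  change ‖(polyHom X hX p : C(X, ℂ))‖ = _
  simp only [ContinuousMap.norm_eq_iSup_norm, polyHom_apply_apply]

theorem norm_one_le : ‖(1 : BX X hX)‖ ≤ 1 :=
  (ContinuousMap.norm_le _ zero_le_one).mpr fun _ => by simp

theorem norm_eval_characterPoint_le (φ : characterSpace ℂ (BX X hX)) (p : MvPolynomial ι ℂ) :
    ‖eval (characterPoint φ) p‖ ≤ ⨆ z : X, ‖eval (z : ι → ℂ) p‖ :=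
  calc ‖eval (characterPoint φ) p‖ = ‖φ (polyHom X hX p)‖ := by rw [apply_polyHom]
    _ ≤ ‖polyHom X hX p‖ * ‖(1 : BX X hX)‖ := AlgHom.norm_apply_le_self_mul_norm_one φ _
    _ ≤ ‖polyHom X hX p‖ := mul_le_of_le_one_right (norm_nonneg _) norm_one_le
    _ = _ := norm_polyHom p

end Norm

theorem evalCharacter_surjective {n : ℕ} {X : Set (Fin n → ℂ)} {hX : IsCompact X}
    [CompactSpace X] (hpc : IsPolyConvex X) : Function.Surjective (BX X hX).evalCharacter :=
  fun φ => ⟨⟨characterPoint φ, hpc _ (norm_eval_characterPoint_le φ)⟩,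
    characterSpace_ext (characterPoint_evalCharacter _)⟩

end BX

/-- **The Gelfand spectrum of `B(X)`.** For a compact polynomially convex set `X ⊆ ℂⁿ`,
the map sending `z ∈ X` to the evaluation character `ε_z : B(X) → ℂ`, `ε_z f = f z`, is
a homeomorphism from `X` onto the character space of `B(X)`; in particular every
character of `B(X)` is evaluation at a unique point of `X`. -/
theorem BX_characterSpace_homeo
    {n : ℕ} (X : Set (Fin n → ℂ)) (hX : IsCompact X) (hpc : IsPolyConvex X) :
    ∃ e : X ≃ₜ WeakDual.characterSpace ℂ (BX X hX),
      ∀ (z : X) (f : BX X hX), (e z : WeakDual ℂ (BX X hX)) f = (f : C(X, ℂ)) z := by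
  have := isCompact_iff_compactSpace.mp hX
  let ε := (BX X hX).evalCharacter
  have hε : Function.Bijective ε :=
    ⟨Subalgebra.evalCharacter_injective BX.separatesPoints, BX.evalCharacter_surjective hpc⟩
  exact ⟨ε.continuous.homeoOfEquivCompactToT2 (f := Equiv.ofBijective ε hε), fun _ _ => rfl⟩
end

section
/- Let X ⊆ ℂⁿ be a compact polynomially convex set and let U ⊆ ℂⁿ be an open set containing X. Then there exists a compact polynomial polyhedron L with X ⊆ L ⊆ U. -/
/-- A compact set `L ⊆ ℂⁿ` is a compact polynomial polyhedron if there are polynomials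
`p₁, …, p_k` with `L = {z : |p₁ z| ≤ 1, …, |p_k z| ≤ 1}`. -/
def IsPolyPolyhedron {n : ℕ} (L : Set (Fin n → ℂ)) : Prop :=
  IsCompact L ∧ ∃ (k : ℕ) (p : Fin k → MvPolynomial (Fin n) ℂ),
    L = {z | ∀ j, ‖MvPolynomial.eval z (p j)‖ ≤ 1}

section Aux

open MvPolynomial Metric
local notation "X'" => MvPolynomial.X

theorem sep_lemma' {n : ℕ} (X : Set (Fin n → ℂ)) (hXc : IsCompact X) (hX :
    ∀ w : Fin n → ℂ,
    (∀ p : MvPolynomial (Fin n) ℂ,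
      ‖MvPolynomial.eval w p‖ ≤ ⨆ z : X, ‖MvPolynomial.eval (z : Fin n → ℂ) p‖) →
    w ∈ X)
    (w : Fin n → ℂ) (hw : w ∉ X) :
    ∃ q : MvPolynomial (Fin n) ℂ, (∀ z ∈ X, ‖eval z q‖ ≤ 1) ∧ 1 < ‖eval w q‖ := by
  have : ¬ ∀ p : MvPolynomial (Fin n) ℂ,
      ‖MvPolynomial.eval w p‖ ≤ ⨆ z : X, ‖MvPolynomial.eval (z : Fin n → ℂ) p‖ :=
    fun h => hw (hX w h)
  push_neg at this
  obtain ⟨p, h⟩ := this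
  set M := ⨆ z : X, ‖MvPolynomial.eval (z : Fin n → ℂ) p‖ with hM
  have hM0 : 0 ≤ M := Real.iSup_nonneg fun z => norm_nonneg _
  obtain ⟨t, ht1, ht2⟩ := exists_between h
  have ht0 : 0 < t := lt_of_le_of_lt hM0 ht1
  have hbdd : BddAbove (Set.range fun z : X => ‖eval (z : Fin n → ℂ) p‖) := by
    have h2 : IsCompact ((fun z => ‖eval z p‖) '' X) :=
      hXc.image (continuous_eval p).norm
    have := h2.bddAbove
    rwa [Set.image_eq_range] at this
  have hn : ‖((t⁻¹ : ℝ) : ℂ)‖ = t⁻¹ := by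
    rw [Complex.norm_real, Real.norm_eq_abs, abs_of_pos (by positivity)]
  refine ⟨C ((t⁻¹ : ℝ) : ℂ) * p, ?_, ?_⟩
  · intro z hz
    have h1 : ‖eval z p‖ ≤ M := le_ciSup hbdd ⟨z, hz⟩
    rw [map_mul, eval_C, norm_mul, hn]
    calc t⁻¹ * ‖eval z p‖ ≤ t⁻¹ * t :=
          mul_le_mul_of_nonneg_left (h1.trans ht1.le) (by positivity)
      _ = 1 := inv_mul_cancel₀ ht0.ne'
  · rw [map_mul, eval_C, norm_mul, hn, ← div_eq_inv_mul, lt_div_iff₀ ht0]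
    simpa using ht2

theorem main {n : ℕ} (X : Set (Fin n → ℂ)) (hXc : IsCompact X) (hX :
    ∀ w : Fin n → ℂ,
    (∀ p : MvPolynomial (Fin n) ℂ,
      ‖MvPolynomial.eval w p‖ ≤ ⨆ z : X, ‖MvPolynomial.eval (z : Fin n → ℂ) p‖) →
    w ∈ X)
    (U : Set (Fin n → ℂ)) (hU : IsOpen U) (hXU : X ⊆ U) :
    ∃ L : Set (Fin n → ℂ),
      (IsCompact L ∧ ∃ (k : ℕ) (p : Fin k → MvPolynomial (Fin n) ℂ),
        L = {z | ∀ j, ‖MvPolynomial.eval z (p j)‖ ≤ 1}) ∧ X ⊆ L ∧ L ⊆ U := by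
  -- choose a ball containing X
  obtain ⟨R, hR0, hXR⟩ : ∃ R : ℝ, 0 < R ∧ X ⊆ closedBall 0 R := by
    obtain ⟨R, hR⟩ := hXc.isBounded.subset_closedBall 0
    exact ⟨max R 1, lt_of_lt_of_le one_pos (le_max_right _ _),
      hR.trans (closedBall_subset_closedBall (le_max_left _ _))⟩
  -- the compact set to separate from X
  set K : Set (Fin n → ℂ) := closedBall 0 R \ U with hK
  have hKc : IsCompact K := (isCompact_closedBall 0 R).diff hU
  -- separating polynomials
  have hsep : ∀ w ∈ K, ∃ q : MvPolynomial (Fin n) ℂ,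
      (∀ z ∈ X, ‖eval z q‖ ≤ 1) ∧ 1 < ‖eval w q‖ := by
    intro w hw
    exact sep_lemma' X hXc hX w (fun hwX => hw.2 (hXU hwX))
  choose! q hq1 hq2 using hsep
  -- open cover of K
  have hcover : K ⊆ ⋃ w ∈ K, {z | 1 < ‖eval z (q w)‖} := by
    intro w hw
    exact Set.mem_biUnion hw (hq2 w hw)
  obtain ⟨s, hsK, hsfin, hscov⟩ := hKc.elim_finite_subcover_image
    (fun w _ => (isOpen_lt continuous_const (continuous_eval (q w)).norm)) hcover
  haveI : Fintype s := hsfin.fintype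
  set m := Fintype.card s with hm
  set e : s ≃ Fin m := Fintype.equivFin s with he
  -- the polynomial family: n coordinate polynomials + m separating polynomials
  set P : Fin (n + m) → MvPolynomial (Fin n) ℂ :=
    fun j => Sum.elim (fun i => C ((R⁻¹ : ℝ) : ℂ) * X' i) (fun j => q (e.symm j))
      (finSumFinEquiv.symm j) with hP
  set L : Set (Fin n → ℂ) := {z | ∀ j, ‖MvPolynomial.eval z (P j)‖ ≤ 1} with hL
  -- membership characterization
  have hmem : ∀ z : Fin n → ℂ, z ∈ L ↔
      ((∀ i : Fin n, ‖z i‖ ≤ R) ∧ ∀ w ∈ s, ‖eval z (q w)‖ ≤ 1) := by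
    intro z
    have hRn : ‖((R⁻¹ : ℝ) : ℂ)‖ = R⁻¹ := by
      rw [Complex.norm_real, Real.norm_eq_abs, abs_of_pos (by positivity)]
    constructor
    · intro hz
      constructor
      · intro i
        have := hz (finSumFinEquiv (Sum.inl i))
        simp only [hP, Equiv.symm_apply_apply, Sum.elim_inl, map_mul, eval_C, eval_X,
          norm_mul, hRn] at this
        rwa [← div_eq_inv_mul, div_le_one hR0] at this
      · intro w hw
        have := hz (finSumFinEquiv (Sum.inr (e ⟨w, hw⟩)))
        simpa only [hP, Equiv.symm_apply_apply, Sum.elim_inr, Equiv.symm_apply_apply] using this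
    · rintro ⟨h1, h2⟩ j
      rcases hj : finSumFinEquiv.symm j with i | k
      · simp only [hP, hj, Sum.elim_inl, map_mul, eval_C, eval_X, norm_mul, hRn]
        rw [← div_eq_inv_mul, div_le_one hR0]
        exact h1 i
      · simp only [hP, hj, Sum.elim_inr]
        exact h2 _ (e.symm k).2
  -- L is contained in the closed ball
  have hLball : L ⊆ closedBall 0 R := by
    intro z hz
    rw [mem_closedBall_zero_iff, pi_norm_le_iff_of_nonneg hR0.le]
    exact ((hmem z).1 hz).1
  -- L is closed
  have hLclosed : IsClosed L := by
    have : L = ⋂ j, {z | ‖MvPolynomial.eval z (P j)‖ ≤ 1} := by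
      ext z; simp [hL, Set.mem_iInter]
    rw [this]
    exact isClosed_iInter fun j =>
      isClosed_le (continuous_eval (P j)).norm continuous_const
  have hLc : IsCompact L := (isCompact_closedBall 0 R).of_isClosed_subset hLclosed hLball
  refine ⟨L, ⟨hLc, n + m, P, rfl⟩, ?_, ?_⟩
  · -- X ⊆ L
    intro z hz
    rw [hmem]
    refine ⟨fun i => ?_, fun w hw => hq1 w (hsK hw) z hz⟩
    calc ‖z i‖ ≤ ‖z‖ := norm_le_pi_norm z i
      _ ≤ R := mem_closedBall_zero_iff.1 (hXR hz)
  · -- L ⊆ U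
    intro z hz
    by_contra hzU
    have hzK : z ∈ K := ⟨hLball hz, hzU⟩
    obtain ⟨w, hw, hw2⟩ := Set.mem_iUnion₂.1 (hscov hzK)
    exact absurd (((hmem z).1 hz).2 w hw) (not_le.2 hw2)

end Aux

/-- **Polyhedral neighborhoods of polynomially convex sets.** If `X ⊆ ℂⁿ` is a compact
polynomially convex set and `U ⊇ X` is open, then there is a compact polynomial
polyhedron `L` with `X ⊆ L ⊆ U`. -/
theorem exists_polyPolyhedron_between
    {n : ℕ} (X : Set (Fin n → ℂ)) (hXc : IsCompact X) (hX : IsPolyConvex X)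
    (U : Set (Fin n → ℂ)) (hU : IsOpen U) (hXU : X ⊆ U) :
    ∃ L : Set (Fin n → ℂ), IsPolyPolyhedron L ∧ X ⊆ L ∧ L ⊆ U := by
  exact main X hXc hX U hU hXU
end

section
/- Every compact polynomially convex set X ⊆ ℂⁿ is the intersection of a nested decreasing sequence of compact polynomial polyhedra: there exist compact polynomial polyhedra L₁ ⊇ L₂ ⊇ L₃ ⊇ ⋯ in ℂⁿ with ⋂_{m} L_m = X. -/
open MvPolynomial Metric Set

/-- A set cut out by a finite set of polynomials is cut out by a `Fin k`-indexed family. -/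
lemma finset_polyhedron_repr {n : ℕ} (S : Finset (MvPolynomial (Fin n) ℂ)) :
    ∃ (k : ℕ) (p : Fin k → MvPolynomial (Fin n) ℂ),
      {z : Fin n → ℂ | ∀ q ∈ S, ‖MvPolynomial.eval z q‖ ≤ 1}
        = {z | ∀ j, ‖MvPolynomial.eval z (p j)‖ ≤ 1} := by
  classical
  refine ⟨Fintype.card S, fun j => ((Fintype.equivFin S).symm j : MvPolynomial (Fin n) ℂ), ?_⟩
  ext z
  constructor
  · intro hz j
    exact hz _ ((Fintype.equivFin S).symm j).2
  · intro hz q hq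
    have := hz (Fintype.equivFin S ⟨q, hq⟩)
    simpa using this
/-- Separation lemma: a point outside a nonempty compact polynomially convex set is
separated by a polynomial with sup-norm `< 1` on the set and value `> 1` at the point. -/
lemma exists_sep {n : ℕ} {X : Set (Fin n → ℂ)} (hXc : IsCompact X) (hX : IsPolyConvex X)
    (hne : X.Nonempty) {w : Fin n → ℂ} (hw : w ∉ X) :
    ∃ q : MvPolynomial (Fin n) ℂ,
      (∀ z ∈ X, ‖MvPolynomial.eval z q‖ < 1) ∧ 1 < ‖MvPolynomial.eval w q‖ := by
  by_contra hcon
  push_neg at hcon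
  -- from poly convexity, get a polynomial violating the sup inequality
  have : ¬ (∀ p : MvPolynomial (Fin n) ℂ,
      ‖MvPolynomial.eval w p‖ ≤ ⨆ z : X, ‖MvPolynomial.eval (z : Fin n → ℂ) p‖) := by
    intro h; exact hw (hX w h)
  push_neg at this
  obtain ⟨p, hp⟩ := this
  set M : ℝ := ⨆ z : X, ‖MvPolynomial.eval (z : Fin n → ℂ) p‖ with hM
  have hcont : Continuous fun z : Fin n → ℂ => ‖MvPolynomial.eval z p‖ :=
    (MvPolynomial.continuous_eval p).norm
  have hbdd : BddAbove (Set.range fun z : X => ‖MvPolynomial.eval (z : Fin n → ℂ) p‖) := by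
    have h := (hXc.image hcont).bddAbove
    rwa [Set.image_eq_range] at h
  have hle : ∀ z ∈ X, ‖MvPolynomial.eval z p‖ ≤ M := fun z hz =>
    le_ciSup hbdd ⟨z, hz⟩
  obtain ⟨z0, hz0⟩ := hne
  have hM0 : 0 ≤ M := le_trans (norm_nonneg _) (hle z0 hz0)
  obtain ⟨t, htM, htw⟩ := exists_between hp
  have ht0 : 0 < t := lt_of_le_of_lt hM0 htM
  set q : MvPolynomial (Fin n) ℂ := MvPolynomial.C ((t⁻¹ : ℝ) : ℂ) * p with hq
  have heval : ∀ z, ‖MvPolynomial.eval z q‖ = t⁻¹ * ‖MvPolynomial.eval z p‖ := by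
    intro z
    rw [hq, map_mul, MvPolynomial.eval_C, norm_mul, Complex.norm_real, Real.norm_eq_abs,
      abs_of_pos (inv_pos.mpr ht0)]
  have hsmall : ∀ z ∈ X, ‖MvPolynomial.eval z q‖ < 1 := by
    intro z hz
    rw [heval]
    calc t⁻¹ * ‖MvPolynomial.eval z p‖ ≤ t⁻¹ * M :=
          mul_le_mul_of_nonneg_left (hle z hz) (le_of_lt (inv_pos.mpr ht0))
      _ < t⁻¹ * t := (mul_lt_mul_iff_right₀ (inv_pos.mpr ht0)).mpr htM
      _ = 1 := by field_simp
  have hbig : 1 < ‖MvPolynomial.eval w q‖ := by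
    rw [heval, show (1 : ℝ) = t⁻¹ * t by field_simp]
    exact (mul_lt_mul_iff_right₀ (inv_pos.mpr ht0)).mpr htw
  exact absurd (hcon q hsmall) (not_le.mpr hbig)

/-- **Polynomially convex sets as intersections of polyhedra.** Every compact
polynomially convex set `X ⊆ ℂⁿ` is the intersection of a nested decreasing sequence of
compact polynomial polyhedra. -/
theorem polyConvex_eq_iInter_polyPolyhedra
    {n : ℕ} (X : Set (Fin n → ℂ)) (hXc : IsCompact X) (hX : IsPolyConvex X) :
    ∃ L : ℕ → Set (Fin n → ℂ),
      (∀ m, IsPolyPolyhedron (L m)) ∧ (∀ m, L (m + 1) ⊆ L m) ∧ (⋂ m, L m) = X := by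
  classical
  rcases X.eq_empty_or_nonempty with hXe | hne
  · -- empty case: use the constant polynomial 2
    refine ⟨fun _ => {z | ‖MvPolynomial.eval z ((MvPolynomial.C 2 : MvPolynomial (Fin n) ℂ))‖ ≤ 1}, ?_, ?_, ?_⟩
    · intro m
      have he : {z : Fin n → ℂ | ‖MvPolynomial.eval z ((MvPolynomial.C 2 : MvPolynomial (Fin n) ℂ))‖ ≤ 1} = ∅ := by
        ext z
        simp only [Set.mem_setOf_eq, Set.mem_empty_iff_false, iff_false, not_le,
          MvPolynomial.eval_C]
        norm_num
      constructor
      · rw [he]; exact isCompact_empty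
      · exact ⟨1, fun _ => MvPolynomial.C 2,
          Set.ext fun z => ⟨fun h _ => h, fun h => h 0⟩⟩
    · intro m; exact subset_rfl
    · rw [hXe]
      ext z
      simp only [Set.mem_iInter, Set.mem_setOf_eq, Set.mem_empty_iff_false, iff_false, not_forall,
        not_le, MvPolynomial.eval_C]
      exact ⟨0, by norm_num⟩
  -- nonempty case
  -- choose a radius R > 0 bounding X
  obtain ⟨R, hR0, hRX⟩ : ∃ R : ℝ, 0 < R ∧ X ⊆ Metric.closedBall 0 R := by
    obtain ⟨R0, hR0⟩ := hXc.isBounded.subset_closedBall 0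
    exact ⟨max R0 1, lt_of_lt_of_le one_pos (le_max_right _ _),
      hR0.trans (Metric.closedBall_subset_closedBall (le_max_left _ _))⟩
  -- base polynomials cutting out the polydisc
  set B : Finset (MvPolynomial (Fin n) ℂ) :=
    Finset.image (fun j => MvPolynomial.C ((R⁻¹ : ℝ) : ℂ) * MvPolynomial.X j) Finset.univ with hB
  have hBval : ∀ j (z : Fin n → ℂ),
      ‖MvPolynomial.eval z (MvPolynomial.C ((R⁻¹ : ℝ) : ℂ) * MvPolynomial.X j)‖
        = R⁻¹ * ‖z j‖ := by
    intro j z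
    rw [map_mul, MvPolynomial.eval_C, MvPolynomial.eval_X, norm_mul, Complex.norm_real,
      Real.norm_eq_abs, abs_of_pos (inv_pos.mpr hR0)]
  have hXB : ∀ z ∈ X, ∀ q ∈ B, ‖MvPolynomial.eval z q‖ ≤ 1 := by
    intro z hz q hq
    rw [hB, Finset.mem_image] at hq
    obtain ⟨j, -, rfl⟩ := hq
    rw [hBval]
    have hzj : ‖z j‖ ≤ R := by
      have := hRX hz
      rw [Metric.mem_closedBall, dist_zero_right] at this
      exact (norm_le_pi_norm z j).trans this
    calc R⁻¹ * ‖z j‖ ≤ R⁻¹ * R := mul_le_mul_of_nonneg_left hzj (le_of_lt (inv_pos.mpr hR0))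
      _ = 1 := by field_simp
  -- membership in the base polyhedron implies being in the closed ball
  have hBball : ∀ z : Fin n → ℂ, (∀ q ∈ B, ‖MvPolynomial.eval z q‖ ≤ 1) →
      z ∈ Metric.closedBall (0 : Fin n → ℂ) R := by
    intro z hz
    rw [Metric.mem_closedBall, dist_zero_right]
    rw [pi_norm_le_iff_of_nonneg hR0.le]
    intro j
    have := hz _ (Finset.mem_image.mpr ⟨j, Finset.mem_univ j, rfl⟩)
    rw [hBval] at this
    calc ‖z j‖ = R * (R⁻¹ * ‖z j‖) := by field_simp
      _ ≤ R * 1 := mul_le_mul_of_nonneg_left this hR0.le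
      _ = R := mul_one R
  -- for each m, a finite set of polynomials excluding points at distance ≥ 1/(m+1)
  have hSm : ∀ m : ℕ, ∃ S : Finset (MvPolynomial (Fin n) ℂ),
      (∀ q ∈ S, ∀ z ∈ X, ‖MvPolynomial.eval z q‖ ≤ 1) ∧
      (∀ z ∈ Metric.closedBall (0 : Fin n → ℂ) R,
        (1 : ℝ) / (m + 1) ≤ Metric.infDist z X → ∃ q ∈ S, 1 < ‖MvPolynomial.eval z q‖) := by
    intro m
    set K : Set (Fin n → ℂ) :=
      Metric.closedBall 0 R ∩ {z | (1 : ℝ) / (m + 1) ≤ Metric.infDist z X} with hK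
    have hKc : IsCompact K := (isCompact_closedBall _ _).of_isClosed_subset
      (IsClosed.inter Metric.isClosed_closedBall
        (isClosed_le continuous_const (Metric.continuous_infDist_pt X)))
      Set.inter_subset_left
    have hKX : ∀ z ∈ K, z ∉ X := by
      intro z hz hzX
      have h1 : (1 : ℝ) / (m + 1) ≤ Metric.infDist z X := hz.2
      have h2 : Metric.infDist z X = 0 := by
        simp [Metric.infDist_zero_of_mem hzX]
      rw [h2] at h1
      have : (0 : ℝ) < 1 / (m + 1) := by positivity
      linarith
    -- choose a separating polynomial for each point of K
    choose! q hq1 hq2 using fun z (hz : z ∈ K) => exists_sep hXc hX hne (hKX z hz)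
    -- open cover
    have hcover : K ⊆ ⋃ z ∈ K, {y | 1 < ‖MvPolynomial.eval y (q z)‖} := by
      intro z hz
      exact Set.mem_biUnion hz (hq2 z hz)
    obtain ⟨t, htK, htfin, htcov⟩ := hKc.elim_finite_subcover_image
      (fun z _ => (isOpen_lt continuous_const (MvPolynomial.continuous_eval (q z)).norm)) hcover
    refine ⟨Finset.image q htfin.toFinset, ?_, ?_⟩
    · intro q' hq' z hz
      rw [Finset.mem_image] at hq'
      obtain ⟨y, hy, rfl⟩ := hq'
      rw [Set.Finite.mem_toFinset] at hy
      exact (hq1 y (htK hy) z hz).le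
    · intro z hz1 hz2
      have hzK : z ∈ K := ⟨hz1, hz2⟩
      have := htcov hzK
      rw [Set.mem_iUnion₂] at this
      obtain ⟨y, hy, hzy⟩ := this
      exact ⟨q y, Finset.mem_image.mpr ⟨y, (Set.Finite.mem_toFinset _).mpr hy, rfl⟩, hzy⟩
  choose S hS1 hS2 using hSm
  -- the cumulative finite sets and the polyhedra
  set T : ℕ → Finset (MvPolynomial (Fin n) ℂ) :=
    fun m => B ∪ (Finset.range (m + 1)).biUnion S with hT
  set L : ℕ → Set (Fin n → ℂ) :=
    fun m => {z | ∀ q ∈ T m, ‖MvPolynomial.eval z q‖ ≤ 1} with hL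
  have hTmono : ∀ m, T m ⊆ T (m + 1) := by
    intro m
    apply Finset.union_subset_union_right
    apply Finset.biUnion_subset_biUnion_of_subset_left
    exact Finset.range_subset_range.mpr (by omega)
  have hXL : ∀ m, X ⊆ L m := by
    intro m z hz q hq
    rw [hT, Finset.mem_union] at hq
    rcases hq with hq | hq
    · exact hXB z hz q hq
    · rw [Finset.mem_biUnion] at hq
      obtain ⟨i, -, hq⟩ := hq
      exact hS1 i q hq z hz
  have hLball : ∀ m, L m ⊆ Metric.closedBall 0 R := by
    intro m z hz
    exact hBball z fun q hq => hz q (Finset.mem_union_left _ hq)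
  refine ⟨L, ?_, ?_, ?_⟩
  · intro m
    constructor
    · apply (isCompact_closedBall (0 : Fin n → ℂ) R).of_isClosed_subset
      · have : L m = ⋂ q ∈ T m, {z | ‖MvPolynomial.eval z q‖ ≤ 1} := by
          ext z; simp [hL]
        rw [this]
        exact isClosed_biInter fun q _ =>
          isClosed_le (MvPolynomial.continuous_eval q).norm continuous_const
      · exact hLball m
    · exact finset_polyhedron_repr (T m)
  · intro m z hz q hq
    exact hz q (hTmono m hq)
  · apply Set.Subset.antisymm
    · intro w hw
      rw [Set.mem_iInter] at hw
      by_contra hwX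
      have hwball : w ∈ Metric.closedBall (0 : Fin n → ℂ) R := hLball 0 (hw 0)
      have hd : 0 < Metric.infDist w X :=
        ((hXc.isClosed.notMem_iff_infDist_pos hne).mp hwX)
      obtain ⟨m, hm⟩ := exists_nat_one_div_lt hd
      obtain ⟨q, hqS, hq⟩ := hS2 m w hwball hm.le
      have : ‖MvPolynomial.eval w q‖ ≤ 1 := by
        apply hw m
        rw [hT, Finset.mem_union]
        right
        exact Finset.mem_biUnion.mpr ⟨m, Finset.self_mem_range_succ m, hqS⟩
      linarith
    · intro z hz
      exact Set.mem_iInter.mpr fun m => hXL m hz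
end

section
/- Let p₁,…,p_k ∈ ℂ[z₁,…,zₙ], suppose X = {z ∈ ℂⁿ : |p₁(z)| ≤ 1, …, |p_k(z)| ≤ 1} is compact, and let R > 0 satisfy |z_i| ≤ R for every z ∈ X and every coordinate i. Let W = {(z,w) ∈ ℂⁿ × ℂᵏ : |z_i| ≤ R and |w_j| ≤ 1 for all i, j}, let Z = {(z,w) ∈ W : p_j(z) = w_j for all j}, and define μ : ℂⁿ → ℂⁿ × ℂᵏ by μ(z) = (z, p₁(z), …, p_k(z)). Then μ restricts to a homeomorphism from X onto Z, and the map f ↦ f ∘ μ is an isometric algebra isomorphism from B(Z) onto B(X). -/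
set_option synthInstance.maxHeartbeats 400000
set_option maxHeartbeats 1000000

open MvPolynomial ContinuousMap

private lemma aeval_cm_apply {Y : Type*} [TopologicalSpace Y] {ι : Type*}
    (c : ι → C(Y, ℂ)) (q : MvPolynomial ι ℂ) (y : Y) :
    (aeval c q) y = eval (fun i => c i y) q := by
  rw [← ContinuousMap.evalAlgHom_apply ℂ ℂ y, MvPolynomial.comp_aeval_apply]
  exact DFunLike.congr_fun (MvPolynomial.coe_aeval_eq_eval _) q

/-- **The Oka embedding of a polynomial polyhedron.** Let
`X = {z : |p₁ z| ≤ 1, …, |p_k z| ≤ 1}` be a compact polynomial polyhedron, `R > 0` a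
bound for the coordinates of points of `X`, `W` the corresponding closed polydisk in
`ℂⁿ × ℂᵏ` (identified with functions on `Fin n ⊕ Fin k`),
`Z = {(z, w) ∈ W : p_j z = w_j}`, and `μ z = (z, p₁ z, …, p_k z)`. Then `Z` is compact,
`μ` restricts to a homeomorphism `e : X ≃ Z`, and `f ↦ f ∘ μ` is an isometric algebra
isomorphism from `B(Z)` onto `B(X)`. -/
theorem oka_embedding_BX_iso
    {n k : ℕ} (p : Fin k → MvPolynomial (Fin n) ℂ)
    (X : Set (Fin n → ℂ)) (hX : X = {z | ∀ j, ‖MvPolynomial.eval z (p j)‖ ≤ 1})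
    (hXc : IsCompact X)
    (R : ℝ) (hR : 0 < R) (hRX : ∀ z ∈ X, ∀ i, ‖z i‖ ≤ R)
    (W Z : Set ((Fin n ⊕ Fin k) → ℂ))
    (hW : W = {x | (∀ i, ‖x (Sum.inl i)‖ ≤ R) ∧ ∀ j, ‖x (Sum.inr j)‖ ≤ 1})
    (hZ : Z = {x | x ∈ W ∧
      ∀ j, MvPolynomial.eval (fun i => x (Sum.inl i)) (p j) = x (Sum.inr j)})
    (μ : (Fin n → ℂ) → ((Fin n ⊕ Fin k) → ℂ))
    (hμ : μ = fun z => Sum.elim z fun j => MvPolynomial.eval z (p j)) :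
    ∃ hZc : IsCompact Z,
      haveI : CompactSpace X := isCompact_iff_compactSpace.mp hXc
      haveI : CompactSpace Z := isCompact_iff_compactSpace.mp hZc
      ∃ e : X ≃ₜ Z,
        (∀ z : X, (e z : (Fin n ⊕ Fin k) → ℂ) = μ (z : Fin n → ℂ)) ∧
        ∃ Φ : BX Z hZc ≃ₐ[ℂ] BX X hXc,
          (∀ (f : BX Z hZc) (z : X),
            (↑(Φ f) : C(X, ℂ)) z = (↑f : C(Z, ℂ)) (e z)) ∧
          ∀ f : BX Z hZc, ‖(↑(Φ f) : C(X, ℂ))‖ = ‖(↑f : C(Z, ℂ))‖ := by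
  -- basic facts
  have hμcont : Continuous μ := by
    subst hμ
    apply continuous_pi
    rintro (i | j)
    · exact continuous_apply i
    · exact (p j).continuous_eval
  have hμmem : ∀ z ∈ X, μ z ∈ Z := by
    intro z hz
    subst hμ hZ hW
    refine ⟨⟨fun i => hRX z hz i, fun j => ?_⟩, fun j => ?_⟩
    · exact (hX ▸ hz) j
    · rfl
  have hproj : ∀ x ∈ Z, (fun i => x (Sum.inl i)) ∈ X ∧ μ (fun i => x (Sum.inl i)) = x := by
    intro x hx
    subst hZ hW
    obtain ⟨⟨-, h2⟩, h3⟩ := hx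
    constructor
    · rw [hX]
      intro j
      rw [h3 j]
      exact h2 j
    · subst hμ
      funext s
      cases s with
      | inl i => rfl
      | inr j => exact h3 j
  have hZeq : Z = μ '' X := by
    apply Set.eq_of_subset_of_subset
    · intro x hx
      exact ⟨_, (hproj x hx).1, (hproj x hx).2⟩
    · rintro - ⟨z, hz, rfl⟩
      exact hμmem z hz
  have hZc : IsCompact Z := hZeq ▸ hXc.image hμcont
  refine ⟨hZc, ?_⟩
  haveI : CompactSpace X := isCompact_iff_compactSpace.mp hXc
  haveI : CompactSpace Z := isCompact_iff_compactSpace.mp hZc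
  -- the homeomorphism
  let e : X ≃ₜ Z :=
    { toFun := fun z => ⟨μ z, hμmem z z.2⟩
      invFun := fun x => ⟨fun i => (x : (Fin n ⊕ Fin k) → ℂ) (Sum.inl i), (hproj x x.2).1⟩
      left_inv := by
        rintro ⟨z, hz⟩
        ext i
        simp [hμ]
      right_inv := by
        rintro ⟨x, hx⟩
        ext1
        exact (hproj x hx).2
      continuous_toFun := Continuous.subtype_mk (hμcont.comp continuous_subtype_val) _
      continuous_invFun := by
        apply Continuous.subtype_mk
        exact continuous_pi fun i => (continuous_apply (Sum.inl i)).comp continuous_subtype_val }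
  refine ⟨e, fun z => rfl, ?_⟩
  -- the C(·,ℂ) level isomorphism
  let ec : C(X, Z) := ⟨e, e.continuous⟩
  let Ψ : C(Z, ℂ) ≃ₐ[ℂ] C(X, ℂ) :=
    AlgEquiv.ofAlgHom (ContinuousMap.compRightAlgHom ℂ ℂ ec)
      (ContinuousMap.compRightAlgHom ℂ ℂ ⟨e.symm, e.symm.continuous⟩)
      (by ext f x; simp [ec])
      (by ext f x; simp [ec])
  have hΨapply : ∀ (f : C(Z, ℂ)) (z : X), Ψ f z = f (e z) := fun f z => rfl
  have hΨnorm : ∀ f : C(Z, ℂ), ‖Ψ f‖ = ‖f‖ := by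
    intro f
    apply le_antisymm
    · refine ContinuousMap.norm_le _ (norm_nonneg f) |>.mpr fun z => ?_
      exact f.norm_coe_le_norm (e z)
    · refine ContinuousMap.norm_le _ (norm_nonneg (Ψ f)) |>.mpr fun x => ?_
      have : f x = Ψ f (e.symm x) := by rw [hΨapply]; simp
      rw [this]
      exact (Ψ f).norm_coe_le_norm _
  have hΨiso : Isometry Ψ := AddMonoidHomClass.isometry_of_norm Ψ.toAlgHom hΨnorm
  let Ψh : C(Z, ℂ) ≃ₜ C(X, ℂ) :=
    { toEquiv := Ψ.toEquiv
      continuous_toFun := hΨiso.continuous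
      continuous_invFun := by
        have : Isometry Ψ.symm := by
          intro a b
          rw [← hΨiso (Ψ.symm a) (Ψ.symm b)]
          simp
        exact this.continuous }
  -- the image of B(Z) is B(X)
  set cz : (Fin n ⊕ Fin k) → C(Z, ℂ) :=
    fun i => ⟨fun z => (z : (Fin n ⊕ Fin k) → ℂ) i,
      (continuous_apply i).comp continuous_subtype_val⟩ with hcz
  set cx : Fin n → C(X, ℂ) :=
    fun i => ⟨fun z => (z : Fin n → ℂ) i,
      (continuous_apply i).comp continuous_subtype_val⟩ with hcx
  have hrange : (Subalgebra.map Ψ.toAlgHom (aeval cz).range) = (aeval cx).range := by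
    have hl : ∀ i, Ψ.toAlgHom (cz (Sum.inl i)) = cx i := by
      intro i
      ext z
      rw [show Ψ.toAlgHom (cz (Sum.inl i)) = Ψ (cz (Sum.inl i)) from rfl, hΨapply]
      show μ (z : Fin n → ℂ) (Sum.inl i) = (z : Fin n → ℂ) i
      simp only [hμ]
      rfl
    have hr : ∀ j, Ψ.toAlgHom (cz (Sum.inr j)) = aeval cx (p j) := by
      intro j
      ext z
      rw [show Ψ.toAlgHom (cz (Sum.inr j)) = Ψ (cz (Sum.inr j)) from rfl, hΨapply,
        aeval_cm_apply]
      show μ (z : Fin n → ℂ) (Sum.inr j) = _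
      simp only [hμ]
      rfl
    rw [← AlgHom.range_comp, MvPolynomial.comp_aeval]
    apply le_antisymm
    · rw [← Algebra.adjoin_range_eq_range_aeval]
      apply Algebra.adjoin_le
      rintro - ⟨i, rfl⟩
      cases i with
      | inl i => exact ⟨MvPolynomial.X i, by show (aeval cx) (MvPolynomial.X i) = _; rw [aeval_X]; exact (hl i).symm⟩
      | inr j => exact ⟨p j, by show (aeval cx) (p j) = _; exact (hr j).symm⟩
    · rw [← Algebra.adjoin_range_eq_range_aeval ℂ cx]
      apply Algebra.adjoin_le
      rintro - ⟨i, rfl⟩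
      refine ⟨MvPolynomial.X (Sum.inl i), ?_⟩
      show (aeval fun i => Ψ.toAlgHom (cz i)) (MvPolynomial.X (Sum.inl i)) = _
      rw [aeval_X]
      exact hl i
  have hBmap : Subalgebra.map Ψ.toAlgHom (BX Z hZc) = BX X hXc := by
    apply SetLike.ext'
    have h1 : (Subalgebra.map Ψ.toAlgHom (BX Z hZc) : Set C(X, ℂ))
        = Ψh '' closure ((aeval cz).range : Set C(Z, ℂ)) := rfl
    have h2 : Ψh '' ((aeval cz).range : Set C(Z, ℂ))
        = ((Subalgebra.map Ψ.toAlgHom (aeval cz).range : Subalgebra ℂ C(X, ℂ)) : Set C(X, ℂ)) :=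
      rfl
    rw [h1, Ψh.image_closure, h2, hrange]
    rfl
  let Φ : BX Z hZc ≃ₐ[ℂ] BX X hXc :=
    (AlgEquiv.subalgebraMap Ψ (BX Z hZc)).trans (Subalgebra.equivOfEq _ _ hBmap)
  refine ⟨Φ, ?_, ?_⟩
  · intro f z
    rfl
  · intro f
    have : (↑(Φ f) : C(X, ℂ)) = Ψ ↑f := rfl
    rw [this, hΨnorm]
end

section
/- Let A be a commutative unital complex Banach algebra and let a₁,…,aₙ ∈ A be elements that topologically generate A, i.e. the ℂ-subalgebra of polynomials in a₁,…,aₙ is dense in A. Then the map χ ↦ (χ(a₁),…,χ(aₙ)) is a homeomorphism from the character space of A onto its image X ⊆ ℂⁿ, and X is a compact polynomially convex set. -/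
set_option synthInstance.maxHeartbeats 400000
set_option maxHeartbeats 1000000

/-!
A character is continuous, so it is determined by its values on the generators `aᵢ`, whose
polynomials are dense; as the character space is compact, the injective continuous map
`χ ↦ (χ aᵢ)ᵢ` is then a closed embedding. For polynomial convexity, let `w` be dominated by the
image `X`. Since `|χ x| ≤ ‖1‖ ‖x‖` for every character, `|q(w)| ≤ ‖1‖ ‖q(a)‖` for every
polynomial `q`, so `q(a) ↦ q(w)` is a well-defined bounded homomorphism on a dense subalgebra.
Its continuous extension to `A` is still multiplicative, i.e. a character `χ` with `χ aᵢ = wᵢ`.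
-/

open MvPolynomial Topology

namespace WeakDual.CharacterSpace

section Algebraic

variable {𝕜 A σ : Type*} [CommRing 𝕜] [NoZeroDivisors 𝕜] [TopologicalSpace 𝕜]
  [ContinuousAdd 𝕜] [ContinuousConstSMul 𝕜 𝕜] [TopologicalSpace A] [CommRing A] [Algebra 𝕜 A]

theorem apply_aeval (χ : characterSpace 𝕜 A) (a : σ → A) (q : MvPolynomial σ 𝕜) :
    χ (aeval a q) = eval (fun i => χ (a i)) q :=
  comp_aeval_apply a (toAlgHom χ) q

theorem eq_of_apply_eq_of_denseRange_aeval [T2Space 𝕜] {a : σ → A}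
    (ha : DenseRange (aeval a : MvPolynomial σ 𝕜 → A)) {χ ψ : characterSpace 𝕜 A}
    (h : ∀ i, χ (a i) = ψ (a i)) : χ = ψ := by
  have hcoe : ⇑χ = ⇑ψ := Continuous.ext_on ha (map_continuous χ) (map_continuous ψ) <| by
    rintro _ ⟨q, rfl⟩
    simp only [apply_aeval, h]
  exact DFunLike.coe_injective hcoe

end Algebraic

section Normed

variable {𝕜 A : Type*} [NontriviallyNormedField 𝕜] [NormedRing A] [NormedAlgebra 𝕜 A]

theorem norm_apply_le [CompleteSpace A] (χ : characterSpace 𝕜 A) (x : A) :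
    ‖χ x‖ ≤ ‖(1 : A)‖ * ‖x‖ :=
  (toStrongDual (χ : WeakDual 𝕜 A)).le_of_opNorm_le (norm_le_norm_one χ) x

theorem exists_apply_eq_of_norm_le [CompleteSpace 𝕜] {R : Type*} [Ring R] [Algebra 𝕜 R]
    (e : R →ₐ[𝕜] A) (he : DenseRange e) (f : R →ₐ[𝕜] 𝕜) {C : ℝ}
    (hf : ∀ x, ‖f x‖ ≤ C * ‖e x‖) : ∃ χ : characterSpace 𝕜 A, ∀ x, χ (e x) = f x := by
  set φ : A →L[𝕜] 𝕜 := f.toLinearMap.extendOfNorm e.toLinearMap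
  have hφ : ∀ x, φ (e x) = f x := LinearMap.extendOfNorm_eq he ⟨C, hf⟩
  have hφ_mul : ∀ x y, φ (x * y) = φ x * φ y := by
    refine he.induction_on₂ (isClosed_eq (by fun_prop) (by fun_prop)) fun x y => ?_
    rw [← map_mul, hφ, hφ, hφ, map_mul]
  have hφ_one : φ 1 = 1 := by rw [← map_one e, hφ, map_one]
  have hφ_ne : (φ : WeakDual 𝕜 A) ≠ 0 := fun h =>
    one_ne_zero (hφ_one.symm.trans (DFunLike.congr_fun h 1))
  exact ⟨⟨φ, hφ_ne, hφ_mul⟩, hφ⟩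

end Normed

theorem isClosedEmbedding_apply_pi {𝕜 A σ : Type*} [NontriviallyNormedField 𝕜] [ProperSpace 𝕜]
    [NormedCommRing A] [NormedAlgebra 𝕜 A] [CompleteSpace A] {a : σ → A}
    (ha : DenseRange (aeval a : MvPolynomial σ 𝕜 → A)) :
    IsClosedEmbedding fun χ : characterSpace 𝕜 A => fun i => χ (a i) :=
  Continuous.isClosedEmbedding
    (continuous_pi fun i => (WeakDual.eval_continuous (a i)).comp continuous_subtype_val)
    fun _ _ h => eq_of_apply_eq_of_denseRange_aeval ha (congrFun h)

theorem isPolyConvex_range_apply_pi {A : Type*} [NormedCommRing A] [NormedAlgebra ℂ A]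
    [CompleteSpace A] {n : ℕ} {a : Fin n → A}
    (ha : DenseRange (aeval a : MvPolynomial (Fin n) ℂ → A)) :
    IsPolyConvex (Set.range fun χ : characterSpace ℂ A => fun i => χ (a i)) := by
  intro w hw
  have hbound : ∀ q : MvPolynomial (Fin n) ℂ, ‖aeval w q‖ ≤ ‖(1 : A)‖ * ‖aeval a q‖ := by
    refine fun q => (hw q).trans (Real.iSup_le ?_ (by positivity))
    rintro ⟨_, χ, rfl⟩
    exact apply_aeval χ a q ▸ norm_apply_le χ _
  obtain ⟨χ, hχ⟩ := exists_apply_eq_of_norm_le (aeval a) ha (aeval w) hbound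
  exact ⟨χ, funext fun i => by simpa using hχ (X i)⟩

end WeakDual.CharacterSpace

open WeakDual.CharacterSpace

/-- **The joint spectrum of generators.** Let `A` be a commutative unital complex
Banach algebra topologically generated by `a₁, …, aₙ` (i.e. polynomials in the `aᵢ` are
dense). Then `χ ↦ (χ a₁, …, χ aₙ)` is a homeomorphism from the character space of `A`
onto its image `X ⊆ ℂⁿ`, and `X` is compact and polynomially convex. -/
theorem characterSpace_homeo_jointSpectrum
    {A : Type*} [NormedCommRing A] [NormedAlgebra ℂ A] [CompleteSpace A]
    {n : ℕ} (a : Fin n → A)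
    (hdense : Dense (Set.range fun q : MvPolynomial (Fin n) ℂ => MvPolynomial.aeval a q))
    (X : Set (Fin n → ℂ))
    (hX : X = Set.range fun χ : WeakDual.characterSpace ℂ A =>
      (fun i => (χ : WeakDual ℂ A) (a i))) :
    (∃ e : WeakDual.characterSpace ℂ A ≃ₜ X,
      ∀ (χ : WeakDual.characterSpace ℂ A) (i : Fin n),
        (e χ : Fin n → ℂ) i = (χ : WeakDual ℂ A) (a i)) ∧
    IsCompact X ∧ IsPolyConvex X := by
  subst hX
  have hemb := isClosedEmbedding_apply_pi (𝕜 := ℂ) hdense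
  exact ⟨⟨hemb.isEmbedding.toHomeomorph, fun _ _ => rfl⟩, isCompact_range hemb.continuous,
    isPolyConvex_range_apply_pi hdense⟩
end
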